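/- arXiv:1209.5555 — 10 statements merged into one kernel-verified Lean document; each statement's English description precedes it below -/
import Mathlib

section
/- Let n ≥ 1, let x, y ∈ ℝⁿ with y ≠ 0, and set u = ‖y‖, r = ‖x‖, s = ⟨x,y⟩/u. Let φ, φ_s, φ_ss be real numbers such that φ ≠ 0, φ − sφ_s ≠ 0 and φ − sφ_s + (r² − s²)φ_ss ≠ 0. Define the n×n matrices g_{ij} = φ(φ − sφ_s)δ_{ij} + (φ_s² + φφ_ss)x_i x_j + [s²φφ_ss − s(φ − sφ_s)φ_s]·(y_i y_j)/u² + [(φ − sφ_s)φ_s − sφφ_ss]·(x_i y_j + x_j y_i)/u, and g^{ij} = ρ₀δ_{ij} + ρ₁·(y_i y_j)/u² + ρ₂·(x_i y_j + x_j y_i)/u + ρ₃ x_i x_j, where ρ₀ = 1/(φ(φ − sφ_s)), ρ₁ = (sφ + (r² − s²)φ_s)(φφ_s − sφ_s² − sφφ_ss)/(φ³(φ − sφ_s)(φ − sφ_s + (r² − s²)φ_ss)), ρ₂ = −(φφ_s − sφ_s² − sφφ_ss)/(φ²(φ − sφ_s)(φ − sφ_s + (r² − s²)φ_ss)), ρ₃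 = −φ_ss/(φ(φ − sφ_s)(φ − sφ_s + (r² − s²)φ_ss)). Then for all i, j: Σ_k g_{ik} g^{kj} = δ_{ij}, i.e. the matrix (g^{ij}) is the inverse of the matrix (g_{ij}). -/
/-!
Both `g` and the proposed inverse are scalar matrices plus a form in the two vectors `x` and
`y / u`, i.e. of the shape `a • 1 + Vᵀ * G * V` where `V` has rows `x` and `y / u` and `G` is a
symmetric `2 × 2` matrix. Such matrices multiply as
`(a • 1 + Vᵀ G V) (b • 1 + Vᵀ H V) = (a b) • 1 + Vᵀ (a H + b G + G (V Vᵀ) H) V`,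
and the Gram matrix `V Vᵀ = !![r², s; s, 1]` only involves `r` and `s`. So the claim reduces to
an identity between `2 × 2` matrices of rational functions of `φ, φ_s, φ_ss, r, s`.
-/

namespace Matrix

variable {m ι R : Type*} [Fintype m] [DecidableEq ι] [CommRing R]

def scalarLowRankUpdate (V : Matrix m ι R) (a : R) (G : Matrix m m R) : Matrix ι ι R :=
  a • 1 + Vᵀ * G * V

theorem scalarLowRankUpdate_apply (V : Matrix m ι R) (a : R) (G : Matrix m m R) (i j : ι) :
    scalarLowRankUpdate V a G i j
      = a * (1 : Matrix ι ι R) i j + ∑ k, ∑ l, V k i * G k l * V l j := by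
  simp only [scalarLowRankUpdate, add_apply, smul_apply, smul_eq_mul, mul_apply, transpose_apply,
    Finset.sum_mul]
  rw [Finset.sum_comm]

theorem scalarLowRankUpdate_mul [Fintype ι] (V : Matrix m ι R) (a b : R) (G H : Matrix m m R) :
    scalarLowRankUpdate V a G * scalarLowRankUpdate V b H
      = scalarLowRankUpdate V (a * b) (a • H + b • G + G * (V * Vᵀ) * H) := by
  simp only [scalarLowRankUpdate, Matrix.add_mul, Matrix.mul_add, Matrix.mul_assoc,
    Matrix.smul_mul, Matrix.mul_smul, smul_add, smul_smul, Matrix.one_mul, Matrix.mul_one,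
    mul_comm b a]
  abel

theorem scalarLowRankUpdate_mul_eq_one [Fintype ι] (V : Matrix m ι R) {a b : R}
    {G H : Matrix m m R} (hab : a * b = 1) (hGH : a • H + b • G + G * (V * Vᵀ) * H = 0) :
    scalarLowRankUpdate V a G * scalarLowRankUpdate V b H = 1 := by
  rw [scalarLowRankUpdate_mul, hab, hGH, scalarLowRankUpdate, Matrix.mul_zero, Matrix.zero_mul,
    one_smul, add_zero]

end Matrix

open Matrix

theorem EuclideanSpace.of_ofLp_mul_transpose {m ι : Type*} [Fintype ι]
    (v : m → EuclideanSpace ℝ ι) :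
    (of fun a => WithLp.ofLp (v a)) * (of fun a => WithLp.ofLp (v a))ᵀ = gram ℝ v := by
  ext a b
  simp [mul_apply, PiLp.inner_apply, mul_comm]

theorem Matrix.gram_fin_two_inv_norm_smul {E : Type*} [NormedAddCommGroup E]
    [InnerProductSpace ℝ E] (x : E) {y : E} (hy : y ≠ 0) :
    gram ℝ ![x, ‖y‖⁻¹ • y]
      = !![‖x‖ ^ 2, inner ℝ x y / ‖y‖; inner ℝ x y / ‖y‖, 1] := by
  ext a b
  fin_cases a <;> fin_cases b <;>
    simp [real_inner_smul_right, real_inner_comm x, div_eq_inv_mul, norm_smul, hy]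

noncomputable section

/- Coefficients of `g_{ij}` and `g^{ij}` in the frame `(x, y / u)`: index `0` stands for `x`,
index `1` for `y / u`. -/

def fundamentalTensorCoeff (φ φs φss s : ℝ) : Matrix (Fin 2) (Fin 2) ℝ :=
  !![φs ^ 2 + φ * φss, (φ - s * φs) * φs - s * φ * φss;
    (φ - s * φs) * φs - s * φ * φss, s ^ 2 * φ * φss - s * (φ - s * φs) * φs]

def inverseTensorCoeff (φ φs φss r s : ℝ) : Matrix (Fin 2) (Fin 2) ℝ :=
  let D := φ * (φ - s * φs) * (φ - s * φs + (r ^ 2 - s ^ 2) * φss)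
  !![-φss / D, -(φ * φs - s * φs ^ 2 - s * φ * φss) / (φ * D);
    -(φ * φs - s * φs ^ 2 - s * φ * φss) / (φ * D),
    (s * φ + (r ^ 2 - s ^ 2) * φs) * (φ * φs - s * φs ^ 2 - s * φ * φss) / (φ ^ 2 * D)]

end

theorem scalarLowRankUpdate_fundamentalTensorCoeff_mul_inverseTensorCoeff {ι : Type*}
    [Fintype ι] [DecidableEq ι] (V : Matrix (Fin 2) ι ℝ) {φ φs φss r s : ℝ}
    (hV : V * Vᵀ = !![r ^ 2, s; s, 1]) (hφ : φ ≠ 0) (h1 : φ - s * φs ≠ 0)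
    (h2 : φ - s * φs + (r ^ 2 - s ^ 2) * φss ≠ 0) :
    scalarLowRankUpdate V (φ * (φ - s * φs)) (fundamentalTensorCoeff φ φs φss s)
      * scalarLowRankUpdate V (φ * (φ - s * φs))⁻¹ (inverseTensorCoeff φ φs φss r s) = 1 := by
  refine scalarLowRankUpdate_mul_eq_one V (mul_inv_cancel₀ (mul_ne_zero hφ h1)) ?_
  -- the form in which `field_simp` looks for this factor
  have h2' : φ - s * φs + φss * (r ^ 2 - s ^ 2) ≠ 0 := by rwa [mul_comm φss]
  rw [hV]
  ext i j
  fin_cases i <;> fin_cases j <;>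
  · simp only [fundamentalTensorCoeff, inverseTensorCoeff, Matrix.add_apply, Matrix.smul_apply,
      mul_apply, Fin.sum_univ_two, of_apply, cons_val', cons_val_zero, cons_val_one,
      cons_val_fin_one, smul_eq_mul, Matrix.zero_apply, Fin.zero_eta, Fin.mk_one, Fin.isValue]
    field_simp
    ring

theorem stmt_0_general (n : ℕ) (x y : EuclideanSpace ℝ (Fin n)) (hy : y ≠ 0)
    (u r s : ℝ) (hu : u = ‖y‖) (hr : r = ‖x‖) (hs : s = (inner ℝ x y : ℝ) / u)
    (φ φs φss : ℝ)
    (hφ : φ ≠ 0) (h1 : φ - s * φs ≠ 0)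
    (h2 : φ - s * φs + (r ^ 2 - s ^ 2) * φss ≠ 0)
    (g ginv : Fin n → Fin n → ℝ)
    (hg : ∀ i j, g i j =
      φ * (φ - s * φs) * (if i = j then (1 : ℝ) else 0)
      + (φs ^ 2 + φ * φss) * (x i * x j)
      + (s ^ 2 * φ * φss - s * (φ - s * φs) * φs) * (y i * y j) / u ^ 2
      + ((φ - s * φs) * φs - s * φ * φss) * (x i * (y j / u) + x j * (y i / u)))
    (ρ₀ ρ₁ ρ₂ ρ₃ : ℝ)
    (hρ₀ : ρ₀ = 1 / (φ * (φ - s * φs)))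
    (hρ₁ : ρ₁ = (s * φ + (r ^ 2 - s ^ 2) * φs) * (φ * φs - s * φs ^ 2 - s * φ * φss)
      / (φ ^ 3 * (φ - s * φs) * (φ - s * φs + (r ^ 2 - s ^ 2) * φss)))
    (hρ₂ : ρ₂ = -(φ * φs - s * φs ^ 2 - s * φ * φss)
      / (φ ^ 2 * (φ - s * φs) * (φ - s * φs + (r ^ 2 - s ^ 2) * φss)))
    (hρ₃ : ρ₃ = -φss / (φ * (φ - s * φs) * (φ - s * φs + (r ^ 2 - s ^ 2) * φss)))
    (hginv : ∀ i j, ginv i j =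
      ρ₀ * (if i = j then (1 : ℝ) else 0)
      + ρ₁ * (y i * y j) / u ^ 2
      + ρ₂ * (x i * (y j / u) + x j * (y i / u))
      + ρ₃ * (x i * x j)) :
    ∀ i j, (∑ k, g i k * ginv k j) = if i = j then (1 : ℝ) else 0 := by
  set V : Matrix (Fin 2) (Fin n) ℝ := of fun a => WithLp.ofLp (![x, u⁻¹ • y] a)
  have hgram : V * Vᵀ = !![r ^ 2, s; s, 1] := by
    rw [EuclideanSpace.of_ofLp_mul_transpose, hu, gram_fin_two_inv_norm_smul x hy, ← hu, ← hr,
      ← hs]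
  have hG : of g
      = scalarLowRankUpdate V (φ * (φ - s * φs)) (fundamentalTensorCoeff φ φs φss s) := by
    ext i j
    simp only [scalarLowRankUpdate_apply, fundamentalTensorCoeff, V, hg, of_apply, one_apply,
      Fin.sum_univ_two, cons_val', cons_val_zero, cons_val_one, cons_val_fin_one, PiLp.smul_apply,
      smul_eq_mul]
    ring
  have hGinv : of ginv
      = scalarLowRankUpdate V (φ * (φ - s * φs))⁻¹ (inverseTensorCoeff φ φs φss r s) := by
    ext i j
    simp only [scalarLowRankUpdate_apply, inverseTensorCoeff, V, hginv, hρ₀, hρ₁, hρ₂, hρ₃,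
      of_apply, one_apply, Fin.sum_univ_two, cons_val', cons_val_zero, cons_val_one,
      cons_val_fin_one, PiLp.smul_apply, smul_eq_mul]
    ring
  have hinv : of g * of ginv = 1 := by
    rw [hG, hGinv]
    exact scalarLowRankUpdate_fundamentalTensorCoeff_mul_inverseTensorCoeff V hgram hφ h1 h2
  intro i j
  simpa only [mul_apply, one_apply, of_apply] using congrFun (congrFun hinv i) j

/-- the matrix `g^{ij} = ρ₀δ_{ij} + ρ₁ y_i y_j/u² + ρ₂(x_i y_j + x_j y_i)/u + ρ₃ x_i x_j`
is the inverse of the fundamental tensor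
`g_{ij} = φ(φ − sφ_s)δ_{ij} + (φ_s² + φφ_ss)x_i x_j + [s²φφ_ss − s(φ − sφ_s)φ_s] y_i y_j/u²
+ [(φ − sφ_s)φ_s − sφφ_ss](x_i y_j + x_j y_i)/u` of a spherically symmetric Finsler metric. -/
theorem stmt_0 (n : ℕ) (hn : 1 ≤ n) (x y : EuclideanSpace ℝ (Fin n)) (hy : y ≠ 0)
    (u r s : ℝ) (hu : u = ‖y‖) (hr : r = ‖x‖) (hs : s = (inner ℝ x y : ℝ) / u)
    (φ φs φss : ℝ)
    (hφ : φ ≠ 0) (h1 : φ - s * φs ≠ 0)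
    (h2 : φ - s * φs + (r ^ 2 - s ^ 2) * φss ≠ 0)
    (g ginv : Fin n → Fin n → ℝ)
    (hg : ∀ i j, g i j =
      φ * (φ - s * φs) * (if i = j then (1 : ℝ) else 0)
      + (φs ^ 2 + φ * φss) * (x i * x j)
      + (s ^ 2 * φ * φss - s * (φ - s * φs) * φs) * (y i * y j) / u ^ 2
      + ((φ - s * φs) * φs - s * φ * φss) * (x i * (y j / u) + x j * (y i / u)))
    (ρ₀ ρ₁ ρ₂ ρ₃ : ℝ)
    (hρ₀ : ρ₀ = 1 / (φ * (φ - s * φs)))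
    (hρ₁ : ρ₁ = (s * φ + (r ^ 2 - s ^ 2) * φs) * (φ * φs - s * φs ^ 2 - s * φ * φss)
      / (φ ^ 3 * (φ - s * φs) * (φ - s * φs + (r ^ 2 - s ^ 2) * φss)))
    (hρ₂ : ρ₂ = -(φ * φs - s * φs ^ 2 - s * φ * φss)
      / (φ ^ 2 * (φ - s * φs) * (φ - s * φs + (r ^ 2 - s ^ 2) * φss)))
    (hρ₃ : ρ₃ = -φss / (φ * (φ - s * φs) * (φ - s * φs + (r ^ 2 - s ^ 2) * φss)))
    (hginv : ∀ i j, ginv i j =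
      ρ₀ * (if i = j then (1 : ℝ) else 0)
      + ρ₁ * (y i * y j) / u ^ 2
      + ρ₂ * (x i * (y j / u) + x j * (y i / u))
      + ρ₃ * (x i * x j)) :
    ∀ i j, (∑ k, g i k * ginv k j) = if i = j then (1 : ℝ) else 0 :=
  stmt_0_general n x y hy u r s hu hr hs φ φs φss hφ h1 h2 g ginv hg ρ₀ ρ₁ ρ₂ ρ₃ hρ₀ hρ₁ hρ₂ hρ₃
    hginv
end

section
/- Fix an integer n ≥ 1 and a real number r > 0, and let P, Q : (−r, r) → ℝ be three times continuously differentiable functions of s (primes denote d/ds). Then the single equation (n+1)(P − sP′) + (r² − s²)(Q′ − sQ″) = 0 holds for all s ∈ (−r, r) if and only if the following system of three equations holds for all s ∈ (−r, r): (n+1)(P − sP′) + (r² − s²)(Q′ − sQ″) = 0, (n+1)(s²P″ + sP′ − P) + r²(s²Q‴ + sQ″ − Q′) + 3s²Q′ − 3s³Q″ − s⁴Q‴ = 0, and (n+1)P″ + 2(Q′ − sQ″) + (r² − s²)Q‴ = 0. -/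
/-!
Write `E = (n+1)(P − sP′) + (r² − s²)(Q′ − sQ″)` and `T` for the left-hand side of the third
equation. Differentiating gives `E′ = −s T`, so `E ≡ 0` forces `T = 0` away from `s = 0`, and at
`s = 0` by continuity of `T`. The second equation is `s² T − E`.
-/

open Filter Topology

theorem eq_zero_of_smul_eq_zero_of_continuousOn {F : Type*} [NormedAddCommGroup F]
    [NormedSpace ℝ F] {U : Set ℝ} (hU : IsOpen U) {f : ℝ → F} (hf : ContinuousOn f U)
    (h : ∀ x ∈ U, x • f x = 0) : ∀ x ∈ U, f x = 0 := by
  intro x hx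
  rcases eq_or_ne x 0 with rfl | hx0
  · have hzero : f =ᶠ[𝓝[≠] 0] 0 := by
      filter_upwards [self_mem_nhdsWithin, mem_nhdsWithin_of_mem_nhds (hU.mem_nhds hx)]
        with y hy hyU
      exact (smul_eq_zero.1 (h y hyU)).resolve_left hy
    exact tendsto_nhds_unique
      ((hf.continuousAt (hU.mem_nhds hx)).tendsto.mono_left nhdsWithin_le_nhds)
      (tendsto_const_nhds.congr' hzero.symm)
  · exact (smul_eq_zero.1 (h x hx)).resolve_left hx0

theorem hasDerivAt_weakBerwald (c r : ℝ) {P Q : ℝ → ℝ} {s : ℝ}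
    (hP : DifferentiableAt ℝ P s) (hP' : DifferentiableAt ℝ (deriv P) s)
    (hQ' : DifferentiableAt ℝ (deriv Q) s) (hQ'' : DifferentiableAt ℝ (deriv (deriv Q)) s) :
    HasDerivAt (fun x => c * (P x - x * deriv P x)
        + (r ^ 2 - x ^ 2) * (deriv Q x - x * deriv (deriv Q) x))
      (-s * (c * deriv (deriv P) s + 2 * (deriv Q s - s * deriv (deriv Q) s)
        + (r ^ 2 - s ^ 2) * deriv (deriv (deriv Q)) s)) s := by
  refine (((hP.hasDerivAt.sub ((hasDerivAt_id s).mul hP'.hasDerivAt)).const_mul c).add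
    (((hasDerivAt_const s (r ^ 2)).sub (hasDerivAt_pow 2 s)).mul
      (hQ'.hasDerivAt.sub ((hasDerivAt_id s).mul hQ''.hasDerivAt)))).congr_deriv ?_
  simp only [Pi.sub_apply, Pi.mul_apply, id, Nat.cast_ofNat]
  ring

theorem thirdEquation_of_weakBerwald {U : Set ℝ} (hU : IsOpen U) (c r : ℝ) {P Q : ℝ → ℝ}
    (hP : ContDiffOn ℝ 3 P U) (hQ : ContDiffOn ℝ 3 Q U)
    (hE : ∀ s ∈ U, c * (P s - s * deriv P s)
      + (r ^ 2 - s ^ 2) * (deriv Q s - s * deriv (deriv Q) s) = 0) :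
    ∀ s ∈ U, c * deriv (deriv P) s + 2 * (deriv Q s - s * deriv (deriv Q) s)
      + (r ^ 2 - s ^ 2) * deriv (deriv (deriv Q)) s = 0 := by
  have hP' := hP.deriv_of_isOpen hU (m := 2) (by norm_num)
  have hQ' := hQ.deriv_of_isOpen hU (m := 2) (by norm_num)
  have hQ'' := hQ'.deriv_of_isOpen hU (m := 1) (by norm_num)
  have hP'' := (hP'.deriv_of_isOpen hU (m := 1) (by norm_num)).continuousOn
  have hQ''' := (hQ''.deriv_of_isOpen hU (m := 0) (by norm_num)).continuousOn
  refine eq_zero_of_smul_eq_zero_of_continuousOn hU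
    (by have := hQ'.continuousOn; have := hQ''.continuousOn; fun_prop) fun s hs => ?_
  have hs' := hU.mem_nhds hs
  have hE' := hasDerivAt_weakBerwald c r
    ((hP.differentiableOn (by norm_num)).differentiableAt hs')
    ((hP'.differentiableOn (by norm_num)).differentiableAt hs')
    ((hQ'.differentiableOn (by norm_num)).differentiableAt hs')
    ((hQ''.differentiableOn (by norm_num)).differentiableAt hs')
  have hE0 := (hasDerivAt_const s (0 : ℝ)).congr_of_eventuallyEq (eventually_of_mem hs' hE)
  simpa [neg_mul, neg_eq_zero] using hE'.unique hE0

theorem stmt_1_general (n : ℕ) (r : ℝ) (P Q : ℝ → ℝ)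
    (hP : ContDiffOn ℝ 3 P (Set.Ioo (-r) r))
    (hQ : ContDiffOn ℝ 3 Q (Set.Ioo (-r) r)) :
    (∀ s ∈ Set.Ioo (-r) r,
        ((n : ℝ) + 1) * (P s - s * deriv P s)
          + (r ^ 2 - s ^ 2) * (deriv Q s - s * deriv (deriv Q) s) = 0) ↔
      (∀ s ∈ Set.Ioo (-r) r,
        (((n : ℝ) + 1) * (P s - s * deriv P s)
          + (r ^ 2 - s ^ 2) * (deriv Q s - s * deriv (deriv Q) s) = 0) ∧
        (((n : ℝ) + 1) * (s ^ 2 * deriv (deriv P) s + s * deriv P s - P s)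
          + r ^ 2 * (s ^ 2 * deriv (deriv (deriv Q)) s + s * deriv (deriv Q) s - deriv Q s)
          + 3 * s ^ 2 * deriv Q s - 3 * s ^ 3 * deriv (deriv Q) s
          - s ^ 4 * deriv (deriv (deriv Q)) s = 0) ∧
        (((n : ℝ) + 1) * deriv (deriv P) s + 2 * (deriv Q s - s * deriv (deriv Q) s)
          + (r ^ 2 - s ^ 2) * deriv (deriv (deriv Q)) s = 0)) := by
  refine ⟨fun hE s hs => ?_, fun h s hs => (h s hs).1⟩
  have hT := thirdEquation_of_weakBerwald isOpen_Ioo _ r hP hQ hE s hs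
  exact ⟨hE s hs, by linear_combination -hE s hs + s ^ 2 * hT, hT⟩

/-- Proposition 2.1: for `C³` functions `P, Q` on `(−r, r)`, the single
equation `(n+1)(P − sP′) + (r² − s²)(Q′ − sQ″) = 0` on `(−r, r)` is equivalent to the
system of three equations expressing the vanishing of the mean Berwald curvature. -/
theorem stmt_1 (n : ℕ) (hn : 1 ≤ n) (r : ℝ) (hr : 0 < r) (P Q : ℝ → ℝ)
    (hP : ContDiffOn ℝ 3 P (Set.Ioo (-r) r))
    (hQ : ContDiffOn ℝ 3 Q (Set.Ioo (-r) r)) :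
    (∀ s ∈ Set.Ioo (-r) r,
        ((n : ℝ) + 1) * (P s - s * deriv P s)
          + (r ^ 2 - s ^ 2) * (deriv Q s - s * deriv (deriv Q) s) = 0) ↔
      (∀ s ∈ Set.Ioo (-r) r,
        (((n : ℝ) + 1) * (P s - s * deriv P s)
          + (r ^ 2 - s ^ 2) * (deriv Q s - s * deriv (deriv Q) s) = 0) ∧
        (((n : ℝ) + 1) * (s ^ 2 * deriv (deriv P) s + s * deriv P s - P s)
          + r ^ 2 * (s ^ 2 * deriv (deriv (deriv Q)) s + s * deriv (deriv Q) s - deriv Q s)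
          + 3 * s ^ 2 * deriv Q s - 3 * s ^ 3 * deriv (deriv Q) s
          - s ^ 4 * deriv (deriv (deriv Q)) s = 0) ∧
        (((n : ℝ) + 1) * deriv (deriv P) s + 2 * (deriv Q s - s * deriv (deriv Q) s)
          + (r ^ 2 - s ^ 2) * deriv (deriv (deriv Q)) s = 0)) :=
  stmt_1_general n r P Q hP hQ
end

section
/- Let n ≥ 1, let x, y ∈ ℝⁿ with y ≠ 0, and set u = ‖y‖, r = ‖x‖, s = ⟨x,y⟩/u, ŷ = y/u. Let φ, L₁, L₂, ρ₀, ρ₁, ρ₂, ρ₃ be arbitrary real numbers, and define L₃ = −s³L₁ + 3sL₂, L₄ = −sL₂, L₅ = −sL₁, L₆ = s²L₁ − L₂. Define the symmetric 3-tensor L_{jkl} = −(φ/2)[L₁ x_j x_k x_l + L₂(x_j δ_{kl} + x_k δ_{jl} + x_l δ_{jk}) + L₃ ŷ_j ŷ_k ŷ_l + L₄(ŷ_j δ_{kl} + ŷ_k δ_{jl} + ŷ_l δ_{jk}) + L₅(ŷ_j x_k x_l + ŷ_k x_j x_l + ŷ_l x_j x_k) + L₆(x_j ŷ_k ŷ_l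 + x_k ŷ_j ŷ_l + x_l ŷ_j ŷ_k)] and the matrix g^{jk} = ρ₀ δ_{jk} + ρ₁ ŷ_j ŷ_k + ρ₂(x_j ŷ_k + x_k ŷ_j) + ρ₃ x_j x_k. Then for every i, Σ_{j,k} L_{ijk} g^{jk} = (x_i − s ŷ_i)·J₁, where J₁ = −(φ/2)[(r² − s²)(ρ₀ + (r² − s²)ρ₃)L₁ + ((n+1)ρ₀ + 3(r² − s²)ρ₃)L₂]. In particular the contraction does not involve ρ₁ and ρ₂. -/
/-!
Write `e = ŷ`, `z = x - s ŷ` and `P = δ - e eᵀ`; then `e ⬝ e = 1`, `z ⬝ e = 0` and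
`z ⬝ z = r² - s²`. The relations defining `L₃, …, L₆` are exactly what makes
`L_{jkl} = -(φ/2) [L₁ z_j z_k z_l + L₂ (z_j P_kl + z_k P_jl + z_l P_jk)]`, a tensor killed by `e`
in every slot. Since `x = z + s e`, the inverse metric is `ρ₀ δ + ρ₃ z ⊗ z` up to terms with a
factor `e`, so `ρ₁` and `ρ₂` drop out, and the two remaining contractions follow from `P z = z`,
`P e = 0` and `tr P = n - 1`.
-/

open Matrix Finset

variable {ι : Type*} [DecidableEq ι]

def orthProj (e : ι → ℝ) : Matrix ι ι ℝ := 1 - vecMulVec e e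

lemma orthProj_apply (e : ι → ℝ) (j k : ι) :
    orthProj e j k = (if j = k then 1 else 0) - e j * e k := by
  simp [orthProj, one_apply, vecMulVec_apply]

lemma orthProj_comm (e : ι → ℝ) (j k : ι) : orthProj e j k = orthProj e k j := by
  simp only [orthProj_apply, eq_comm, mul_comm]

def landsbergTensor (a b : ℝ) (z e : ι → ℝ) (j k l : ι) : ℝ :=
  a * z j * z k * z l + b * (z j * orthProj e k l + z k * orthProj e j l + z l * orthProj e j k)

variable (a b : ℝ) (z e : ι → ℝ)

lemma landsbergTensor_swap (i j k : ι) :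
    landsbergTensor a b z e i j k = landsbergTensor a b z e i k j := by
  simp only [landsbergTensor, orthProj_comm e j k]; ring

variable [Fintype ι]

lemma orthProj_mulVec (e v : ι → ℝ) : orthProj e *ᵥ v = v - (e ⬝ᵥ v) • e := by
  simp [orthProj, sub_mulVec, vecMulVec_mulVec]

lemma orthProj_mulVec_self {e : ι → ℝ} (he : e ⬝ᵥ e = 1) : orthProj e *ᵥ e = 0 := by
  simp [orthProj_mulVec, he]

lemma orthProj_mulVec_of_dotProduct_eq_zero {e v : ι → ℝ} (h : e ⬝ᵥ v = 0) :
    orthProj e *ᵥ v = v := by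
  simp [orthProj_mulVec, h]

lemma trace_orthProj {e : ι → ℝ} (he : e ⬝ᵥ e = 1) :
    trace (orthProj e) = Fintype.card ι - 1 := by
  simp [orthProj, he]

lemma orthProj_mulVec_dotProduct_self {e : ι → ℝ} (he : e ⬝ᵥ e = 1) (v : ι → ℝ) :
    orthProj e *ᵥ v ⬝ᵥ e = 0 := by
  rw [orthProj_mulVec, sub_dotProduct, smul_dotProduct, he, dotProduct_comm, smul_eq_mul, mul_one,
    sub_self]

lemma orthProj_mulVec_dotProduct_orthProj_mulVec {e : ι → ℝ} (he : e ⬝ᵥ e = 1) (v : ι → ℝ) :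
    orthProj e *ᵥ v ⬝ᵥ orthProj e *ᵥ v = v ⬝ᵥ v - (e ⬝ᵥ v) ^ 2 := by
  simp only [orthProj_mulVec, dotProduct_sub, sub_dotProduct, dotProduct_smul, smul_dotProduct,
    dotProduct_comm v e, he, smul_eq_mul]
  ring

lemma sum_landsbergTensor_mul (j k : ι) (v : ι → ℝ) :
    ∑ l, landsbergTensor a b z e j k l * v l =
      a * z j * z k * (z ⬝ᵥ v) + b * (z j * (orthProj e *ᵥ v) k + z k * (orthProj e *ᵥ v) j
        + (z ⬝ᵥ v) * orthProj e j k) := by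
  simp only [landsbergTensor, mulVec, dotProduct, mul_sum, sum_mul, ← sum_add_distrib]
  exact sum_congr rfl fun l _ => by ring

lemma sum_landsbergTensor_diag (i : ι) :
    ∑ j, landsbergTensor a b z e i j j =
      a * z i * (z ⬝ᵥ z) + b * (z i * trace (orthProj e) + 2 * (orthProj e *ᵥ z) i) := by
  simp only [landsbergTensor, mulVec, dotProduct, trace, Matrix.diag, mul_sum, ← sum_add_distrib]
  exact sum_congr rfl fun l _ => by rw [orthProj_comm e i l]; ring

lemma sum_sum_landsbergTensor_mul_eq_zero_left (i : ι) (he : e ⬝ᵥ e = 1) (hze : z ⬝ᵥ e = 0)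
    (p : ι → ℝ) : ∑ j, ∑ k, landsbergTensor a b z e i j k * (e j * p k) = 0 := by
  rw [sum_comm]
  refine sum_eq_zero fun k _ => ?_
  simp_rw [landsbergTensor_swap a b z e i _ k, ← mul_assoc, ← sum_mul, sum_landsbergTensor_mul,
    orthProj_mulVec_self he, hze]
  simp

lemma sum_sum_landsbergTensor_mul_eq_zero_right (i : ι) (he : e ⬝ᵥ e = 1) (hze : z ⬝ᵥ e = 0)
    (q : ι → ℝ) : ∑ j, ∑ k, landsbergTensor a b z e i j k * (q j * e k) = 0 := by
  refine sum_eq_zero fun j _ => ?_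
  simp_rw [mul_left_comm _ (q j), ← mul_sum, sum_landsbergTensor_mul, orthProj_mulVec_self he, hze]
  simp

lemma sum_sum_landsbergTensor_mul_self (i : ι) (hze : z ⬝ᵥ e = 0) :
    ∑ j, ∑ k, landsbergTensor a b z e i j k * (z j * z k) =
      z i * (z ⬝ᵥ z) * (a * (z ⬝ᵥ z) + 3 * b) := by
  have hPz : orthProj e *ᵥ z = z :=
    orthProj_mulVec_of_dotProduct_eq_zero ((dotProduct_comm _ _).trans hze)
  calc ∑ j, ∑ k, landsbergTensor a b z e i j k * (z j * z k)
      = ∑ j, z j * (a * z i * z j * (z ⬝ᵥ z)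
          + b * (z i * z j + z j * z i + (z ⬝ᵥ z) * orthProj e i j)) := by
        simp_rw [mul_left_comm _ (z _), ← mul_sum, sum_landsbergTensor_mul, hPz]
    _ = ∑ j, ((a * z i * (z ⬝ᵥ z) + 2 * b * z i) * (z j * z j)
          + b * (z ⬝ᵥ z) * (orthProj e i j * z j)) := sum_congr rfl fun j _ => by ring
    _ = (a * z i * (z ⬝ᵥ z) + 2 * b * z i) * (z ⬝ᵥ z) + b * (z ⬝ᵥ z) * (orthProj e *ᵥ z) i := by
        rw [sum_add_distrib, ← mul_sum, ← mul_sum]; rfl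
    _ = z i * (z ⬝ᵥ z) * (a * (z ⬝ᵥ z) + 3 * b) := by rw [hPz]; ring

lemma sum_sum_landsbergTensor_mul_inverseMetric (i : ι) (he : e ⬝ᵥ e = 1) (hze : z ⬝ᵥ e = 0)
    (ρ c : ℝ) (p q : ι → ℝ) :
    ∑ j, ∑ k, landsbergTensor a b z e i j k *
        (ρ * (1 : Matrix ι ι ℝ) j k + e j * p k + q j * e k + c * (z j * z k)) =
      z i * (ρ * (a * (z ⬝ᵥ z) + (Fintype.card ι + 1) * b)
        + c * (z ⬝ᵥ z) * (a * (z ⬝ᵥ z) + 3 * b)) := by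
  have hdiag : ∑ j, ∑ k, landsbergTensor a b z e i j k * (ρ * (1 : Matrix ι ι ℝ) j k) =
      ρ * ∑ j, landsbergTensor a b z e i j j := by
    simp [one_apply, mul_sum, mul_comm]
  simp only [mul_add, sum_add_distrib, hdiag, sum_landsbergTensor_diag, trace_orthProj he,
    sum_sum_landsbergTensor_mul_eq_zero_left a b z e i he hze,
    sum_sum_landsbergTensor_mul_eq_zero_right a b z e i he hze,
    mul_left_comm _ c, ← mul_sum, sum_sum_landsbergTensor_mul_self a b z e i hze,
    orthProj_mulVec_of_dotProduct_eq_zero ((dotProduct_comm _ _).trans hze)]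
  ring

open WithLp in
lemma EuclideanSpace.ofLp_dotProduct_ofLp {ι : Type*} [Fintype ι] (x y : EuclideanSpace ℝ ι) :
    ofLp x ⬝ᵥ ofLp y = inner ℝ x y := by
  simp [EuclideanSpace.inner_eq_star_dotProduct, dotProduct_comm]

open WithLp in
lemma EuclideanSpace.ofLp_normalize_dotProduct_self {ι : Type*} [Fintype ι]
    {y : EuclideanSpace ℝ ι} (hy : y ≠ 0) :
    (‖y‖⁻¹ • ofLp y) ⬝ᵥ (‖y‖⁻¹ • ofLp y) = 1 := by
  have : ‖y‖ ≠ 0 := norm_ne_zero_iff.mpr hy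
  rw [smul_dotProduct, dotProduct_smul, ofLp_dotProduct_ofLp, real_inner_self_eq_norm_sq,
    smul_eq_mul, smul_eq_mul]
  field_simp

theorem stmt_2_general (n : ℕ) (x y : EuclideanSpace ℝ (Fin n)) (hy : y ≠ 0)
    (u r s : ℝ) (hu : u = ‖y‖) (hr : r = ‖x‖) (hs : s = (inner ℝ x y : ℝ) / u)
    (φ L₁ L₂ ρ₀ ρ₁ ρ₂ ρ₃ L₃ L₄ L₅ L₆ : ℝ)
    (hL₃ : L₃ = -s ^ 3 * L₁ + 3 * s * L₂) (hL₄ : L₄ = -s * L₂)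
    (hL₅ : L₅ = -s * L₁) (hL₆ : L₆ = s ^ 2 * L₁ - L₂)
    (L : Fin n → Fin n → Fin n → ℝ)
    (hL : ∀ j k l, L j k l = -(φ / 2) *
      (L₁ * x j * x k * x l
        + L₂ * (x j * (if k = l then (1 : ℝ) else 0) + x k * (if j = l then (1 : ℝ) else 0)
            + x l * (if j = k then (1 : ℝ) else 0))
        + L₃ * (y j / u) * (y k / u) * (y l / u)
        + L₄ * ((y j / u) * (if k = l then (1 : ℝ) else 0)
            + (y k / u) * (if j = l then (1 : ℝ) else 0)
            + (y l / u) * (if j = k then (1 : ℝ) else 0))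
        + L₅ * ((y j / u) * x k * x l + (y k / u) * x j * x l + (y l / u) * x j * x k)
        + L₆ * (x j * (y k / u) * (y l / u) + x k * (y j / u) * (y l / u)
            + x l * (y j / u) * (y k / u))))
    (ginv : Fin n → Fin n → ℝ)
    (hginv : ∀ j k, ginv j k = ρ₀ * (if j = k then (1 : ℝ) else 0)
      + ρ₁ * (y j / u) * (y k / u) + ρ₂ * (x j * (y k / u) + x k * (y j / u))
      + ρ₃ * x j * x k)
    (J₁ : ℝ)
    (hJ₁ : J₁ = -(φ / 2) * ((r ^ 2 - s ^ 2) * (ρ₀ + (r ^ 2 - s ^ 2) * ρ₃) * L₁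
      + (((n : ℝ) + 1) * ρ₀ + 3 * (r ^ 2 - s ^ 2) * ρ₃) * L₂)) :
    ∀ i, (∑ j, ∑ k, L i j k * ginv j k) = (x i - s * (y i / u)) * J₁ := by
  intro i
  subst hu
  obtain ⟨e, he_def⟩ : ∃ e : Fin n → ℝ, e = ‖y‖⁻¹ • WithLp.ofLp y := ⟨_, rfl⟩
  have he : e ⬝ᵥ e = 1 := he_def ▸ EuclideanSpace.ofLp_normalize_dotProduct_self hy
  have hex : e ⬝ᵥ WithLp.ofLp x = s := by
    rw [he_def, smul_dotProduct, dotProduct_comm, EuclideanSpace.ofLp_dotProduct_ofLp, hs,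
      smul_eq_mul, inv_mul_eq_div]
  obtain ⟨z, hz_def⟩ : ∃ z : Fin n → ℝ, z = orthProj e *ᵥ WithLp.ofLp x := ⟨_, rfl⟩
  have hz : ∀ j, z j = x j - s * (y j / ‖y‖) := fun j => by
    rw [hz_def, orthProj_mulVec, hex, he_def]
    simp only [Pi.sub_apply, Pi.smul_apply, smul_eq_mul]
    ring
  have hzz : z ⬝ᵥ z = r ^ 2 - s ^ 2 := by
    rw [hz_def, orthProj_mulVec_dotProduct_orthProj_mulVec he, hex,
      EuclideanSpace.ofLp_dotProduct_ofLp, real_inner_self_eq_norm_sq, ← hr]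
  have hLT : ∀ j k l, L j k l = landsbergTensor (-(φ / 2) * L₁) (-(φ / 2) * L₂) z e j k l := by
    intro j k l
    simp only [hL, landsbergTensor, orthProj_apply, hz, he_def, hL₃, hL₄, hL₅, hL₆,
      Pi.smul_apply, smul_eq_mul]
    ring
  have hg : ∀ j k, ginv j k = ρ₀ * (1 : Matrix (Fin n) (Fin n) ℝ) j k
      + e j * ((ρ₁ + 2 * s * ρ₂ + s ^ 2 * ρ₃) * e k + (ρ₂ + s * ρ₃) * z k)
      + (ρ₂ + s * ρ₃) * z j * e k + ρ₃ * (z j * z k) := by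
    intro j k
    simp only [hginv, Matrix.one_apply, hz, he_def, Pi.smul_apply, smul_eq_mul]
    ring
  simp only [hLT, hg]
  rw [sum_sum_landsbergTensor_mul_inverseMetric _ _ z e i he
    (hz_def ▸ orthProj_mulVec_dotProduct_self he _), hzz, hJ₁, hz, Fintype.card_fin]
  ring

/-- contraction of the Landsberg curvature tensor of a spherically
symmetric Finsler metric with the inverse metric: `Σ_{j,k} L_{ijk} g^{jk} = (x_i − s ŷ_i)·J₁`,
with `J₁ = −(φ/2)[(r² − s²)(ρ₀ + (r² − s²)ρ₃)L₁ + ((n+1)ρ₀ + 3(r² − s²)ρ₃)L₂]`. -/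
theorem stmt_2 (n : ℕ) (hn : 1 ≤ n) (x y : EuclideanSpace ℝ (Fin n)) (hy : y ≠ 0)
    (u r s : ℝ) (hu : u = ‖y‖) (hr : r = ‖x‖) (hs : s = (inner ℝ x y : ℝ) / u)
    (φ L₁ L₂ ρ₀ ρ₁ ρ₂ ρ₃ L₃ L₄ L₅ L₆ : ℝ)
    (hL₃ : L₃ = -s ^ 3 * L₁ + 3 * s * L₂) (hL₄ : L₄ = -s * L₂)
    (hL₅ : L₅ = -s * L₁) (hL₆ : L₆ = s ^ 2 * L₁ - L₂)
    (L : Fin n → Fin n → Fin n → ℝ)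
    (hL : ∀ j k l, L j k l = -(φ / 2) *
      (L₁ * x j * x k * x l
        + L₂ * (x j * (if k = l then (1 : ℝ) else 0) + x k * (if j = l then (1 : ℝ) else 0)
            + x l * (if j = k then (1 : ℝ) else 0))
        + L₃ * (y j / u) * (y k / u) * (y l / u)
        + L₄ * ((y j / u) * (if k = l then (1 : ℝ) else 0)
            + (y k / u) * (if j = l then (1 : ℝ) else 0)
            + (y l / u) * (if j = k then (1 : ℝ) else 0))
        + L₅ * ((y j / u) * x k * x l + (y k / u) * x j * x l + (y l / u) * x j * x k)
        + L₆ * (x j * (y k / u) * (y l / u) + x k * (y j / u) * (y l / u)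
            + x l * (y j / u) * (y k / u))))
    (ginv : Fin n → Fin n → ℝ)
    (hginv : ∀ j k, ginv j k = ρ₀ * (if j = k then (1 : ℝ) else 0)
      + ρ₁ * (y j / u) * (y k / u) + ρ₂ * (x j * (y k / u) + x k * (y j / u))
      + ρ₃ * x j * x k)
    (J₁ : ℝ)
    (hJ₁ : J₁ = -(φ / 2) * ((r ^ 2 - s ^ 2) * (ρ₀ + (r ^ 2 - s ^ 2) * ρ₃) * L₁
      + (((n : ℝ) + 1) * ρ₀ + 3 * (r ^ 2 - s ^ 2) * ρ₃) * L₂)) :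
    ∀ i, (∑ j, ∑ k, L i j k * ginv j k) = (x i - s * (y i / u)) * J₁ :=
  stmt_2_general n x y hy u r s hu hr hs φ L₁ L₂ ρ₀ ρ₁ ρ₂ ρ₃ L₃ L₄ L₅ L₆ hL₃ hL₄ hL₅ hL₆ L hL ginv
    hginv J₁ hJ₁
end

section
/- Let D = {(r,s) : r ∈ I, 0 < |s| < r} for an open interval I ⊆ (0,∞), and let φ : D → ℝ be a smooth positive function with φ − sφ_s + (r² − s²)φ_ss ≠ 0 on D. Define P = −(1/φ)(sφ + (r² − s²)φ_s)Q + (1/(2rφ))(sφ_r + rφ_s) and Q = (1/(2r))·(−φ_r + sφ_{rs} + rφ_{ss})/(φ − sφ_s + (r² − s²)φ_{ss}), and set U = (sφ + (r² − s²)φ_s)/φ and W = (sφ_r + rφ_s)/φ. Then at every point of D where U² − sU + (r² − s²)U_s ≠ 0, the following two identities hold: P = −QU + W/(2r), and Q = (1/(2rs))·(2rU − 2rs − 2r²W + s(r² − s²)W_s + s²W + sUW)/(U² − sU + (r² − s²)U_s). -/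
open Filter

lemma alg2 (p pr ps pss prs r s U W Q dU dW : ℝ)
    (hp : p ≠ 0) (hr : r ≠ 0) (hs : s ≠ 0)
    (hT : p - s*ps + (r^2-s^2)*pss ≠ 0)
    (hU : U = (s*p + (r^2-s^2)*ps)/p)
    (hW : W = (s*pr + r*ps)/p)
    (hQ : Q = (1/(2*r)) * ((-pr + s*prs + r*pss)/(p - s*ps + (r^2-s^2)*pss)))
    (hdU : dU = ((p - s*ps + (r^2-s^2)*pss)*p - (s*p + (r^2-s^2)*ps)*ps)/p^2)
    (hdW : dW = ((pr + s*prs + r*pss)*p - (s*pr + r*ps)*ps)/p^2)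
    (hD : U^2 - s*U + (r^2-s^2)*dU ≠ 0) :
    Q = (1/(2*r*s)) * ((2*r*U - 2*r*s - 2*r^2*W + s*(r^2-s^2)*dW + s^2*W + s*U*W)
      / (U^2 - s*U + (r^2-s^2)*dU)) := by
  have hDval : U^2 - s*U + (r^2-s^2)*dU = (r^2-s^2)*(p - s*ps + (r^2-s^2)*pss)/p := by
    subst hU hdU; field_simp; ring
  have hrs : r^2 - s^2 ≠ 0 := by
    intro h; apply hD; rw [hDval, h]; simp
  rw [hQ, hDval, hU, hW, hdW]
  field_simp
  ring

/-- for a spherically symmetric Finsler surface `F = uφ(r,s)` with spray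
coefficients `P, Q`, the normalized quantities `U = (sφ + (r² − s²)φ_s)/φ` and
`W = (sφ_r + rφ_s)/φ` satisfy `P = −QU + W/(2r)` and
`Q = (1/(2rs))(2rU − 2rs − 2r²W + s(r² − s²)W_s + s²W + sUW)/(U² − sU + (r² − s²)U_s)`
on the domain `D = {(r,s) : r ∈ I, 0 < |s| < r}`. -/
theorem stmt_6 (a b : ℝ) (ha : 0 ≤ a)
    (φ : ℝ → ℝ → ℝ)
    (hφ : ContDiffOn ℝ (⊤ : ℕ∞) (fun p : ℝ × ℝ => φ p.1 p.2)
      {p : ℝ × ℝ | p.1 ∈ Set.Ioo a b ∧ 0 < |p.2| ∧ |p.2| < p.1})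
    (hφpos : ∀ r ∈ Set.Ioo a b, ∀ s : ℝ, 0 < |s| → |s| < r → 0 < φ r s)
    (hnz : ∀ r ∈ Set.Ioo a b, ∀ s : ℝ, 0 < |s| → |s| < r →
      φ r s - s * deriv (φ r) s + (r ^ 2 - s ^ 2) * deriv (deriv (φ r)) s ≠ 0)
    (P Q U W : ℝ → ℝ → ℝ)
    (hQ : ∀ r s, Q r s = (1 / (2 * r)) *
      ((-(deriv (fun t => φ t s) r) + s * deriv (fun t => deriv (φ t) s) r
          + r * deriv (deriv (φ r)) s)
        / (φ r s - s * deriv (φ r) s + (r ^ 2 - s ^ 2) * deriv (deriv (φ r)) s)))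
    (hP : ∀ r s, P r s = -(1 / φ r s) * (s * φ r s + (r ^ 2 - s ^ 2) * deriv (φ r) s) * Q r s
      + (1 / (2 * r * φ r s)) * (s * deriv (fun t => φ t s) r + r * deriv (φ r) s))
    (hU : ∀ r s, U r s = (s * φ r s + (r ^ 2 - s ^ 2) * deriv (φ r) s) / φ r s)
    (hW : ∀ r s, W r s = (s * deriv (fun t => φ t s) r + r * deriv (φ r) s) / φ r s) :
    ∀ r ∈ Set.Ioo a b, ∀ s : ℝ, 0 < |s| → |s| < r →
      (U r s) ^ 2 - s * U r s + (r ^ 2 - s ^ 2) * deriv (U r) s ≠ 0 →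
      (P r s = -(Q r s) * U r s + W r s / (2 * r) ∧
        Q r s = (1 / (2 * r * s)) *
          ((2 * r * U r s - 2 * r * s - 2 * r ^ 2 * W r s + s * (r ^ 2 - s ^ 2) * deriv (W r) s
              + s ^ 2 * W r s + s * U r s * W r s)
            / ((U r s) ^ 2 - s * U r s + (r ^ 2 - s ^ 2) * deriv (U r) s))) := by
  intro r hrI s hs0 hsr hD
  have hr0 : (0:ℝ) < r := lt_of_le_of_lt (abs_nonneg s) hsr
  have hrne : r ≠ 0 := ne_of_gt hr0
  have hsne : s ≠ 0 := fun h => by simp [h] at hs0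
  have hp0 : φ r s ≠ 0 := (hφpos r hrI s hs0 hsr).ne'
  -- Part 1
  have part1 : P r s = -(Q r s) * U r s + W r s / (2 * r) := by
    rw [hP r s, hU r s, hW r s]
    field_simp
  refine ⟨part1, ?_⟩
  -- setup
  set S : Set (ℝ × ℝ) := {p : ℝ × ℝ | p.1 ∈ Set.Ioo a b ∧ 0 < |p.2| ∧ |p.2| < p.1} with hSdef
  have hSopen : IsOpen S := by
    have h1 : IsOpen {p : ℝ × ℝ | p.1 ∈ Set.Ioo a b} := isOpen_Ioo.preimage continuous_fst
    have h2 : IsOpen {p : ℝ × ℝ | 0 < |p.2|} :=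
      isOpen_lt continuous_const (continuous_abs.comp continuous_snd)
    have h3 : IsOpen {p : ℝ × ℝ | |p.2| < p.1} :=
      isOpen_lt (continuous_abs.comp continuous_snd) continuous_fst
    exact h1.and (h2.and h3)
  set f : ℝ × ℝ → ℝ := fun p => φ p.1 p.2 with hfdef
  have hf : ContDiffOn ℝ (⊤ : ℕ∞) f S := hφ
  have hxS : (r, s) ∈ S := ⟨hrI, hs0, hsr⟩
  have hdf : ∀ p ∈ S, DifferentiableAt ℝ f p := fun p hp =>
    (hf.contDiffAt (hSopen.mem_nhds hp)).differentiableAt (by simp)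
  have hdf' : DifferentiableAt ℝ (fderiv ℝ f) (r, s) :=
    ((hf.fderiv_of_isOpen hSopen (m := 1) (WithTop.coe_le_coe.mpr le_top)).contDiffAt
      (hSopen.mem_nhds hxS)).differentiableAt one_ne_zero
  set B := fderiv ℝ (fderiv ℝ f) (r, s) with hBdef
  -- vertical and horizontal first partials
  have hvert : ∀ p ∈ S, HasDerivAt (fun y => φ p.1 y) (fderiv ℝ f p (0, 1)) p.2 := by
    intro p hp
    have h1 : HasDerivAt (fun y => ((p.1, y) : ℝ × ℝ)) ((0 : ℝ), (1 : ℝ)) p.2 :=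
      (hasDerivAt_const p.2 p.1).prodMk (hasDerivAt_id p.2)
    exact (hdf p hp).hasFDerivAt.comp_hasDerivAt p.2 h1
  have hhor : ∀ p ∈ S, HasDerivAt (fun t => φ t p.2) (fderiv ℝ f p (1, 0)) p.1 := by
    intro p hp
    have h1 : HasDerivAt (fun t => ((t, p.2) : ℝ × ℝ)) ((1 : ℝ), (0 : ℝ)) p.1 :=
      (hasDerivAt_id p.1).prodMk (hasDerivAt_const p.1 p.2)
    exact (hdf p hp).hasFDerivAt.comp_hasDerivAt p.1 h1
  have hnbhd_s : ∀ᶠ y in nhds s, ((r, y) : ℝ × ℝ) ∈ S := by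
    have hc : ContinuousAt (fun y : ℝ => ((r, y) : ℝ × ℝ)) s :=
      (continuous_const.prodMk continuous_id).continuousAt
    exact hc.preimage_mem_nhds (hSopen.mem_nhds hxS)
  have hnbhd_r : ∀ᶠ t in nhds r, ((t, s) : ℝ × ℝ) ∈ S := by
    have hc : ContinuousAt (fun t : ℝ => ((t, s) : ℝ × ℝ)) r :=
      (continuous_id.prodMk continuous_const).continuousAt
    exact hc.preimage_mem_nhds (hSopen.mem_nhds hxS)
  -- second partials
  have hB1 : HasDerivAt (fun y => fderiv ℝ f (r, y)) (B ((0 : ℝ), (1 : ℝ))) s :=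
    hdf'.hasFDerivAt.comp_hasDerivAt s ((hasDerivAt_const s r).prodMk (hasDerivAt_id s))
  have hB2 : HasDerivAt (fun t => fderiv ℝ f (t, s)) (B ((1 : ℝ), (0 : ℝ))) r :=
    hdf'.hasFDerivAt.comp_hasDerivAt r ((hasDerivAt_id r).prodMk (hasDerivAt_const r s))
  have hBss : HasDerivAt (fun y => fderiv ℝ f (r, y) (0, 1)) (B (0, 1) (0, 1)) s := by
    have := hB1.clm_apply (hasDerivAt_const s (((0 : ℝ), (1 : ℝ)) : ℝ × ℝ))
    simpa using this
  have hBrs : HasDerivAt (fun y => fderiv ℝ f (r, y) (1, 0)) (B (0, 1) (1, 0)) s := by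
    have := hB1.clm_apply (hasDerivAt_const s (((1 : ℝ), (0 : ℝ)) : ℝ × ℝ))
    simpa using this
  have hBsr : HasDerivAt (fun t => fderiv ℝ f (t, s) (0, 1)) (B (1, 0) (0, 1)) r := by
    have := hB2.clm_apply (hasDerivAt_const r (((0 : ℝ), (1 : ℝ)) : ℝ × ℝ))
    simpa using this
  have hsymm : ∀ v w : ℝ × ℝ, B v w = B w v := by
    have hev : ∀ᶠ p in nhds ((r, s) : ℝ × ℝ), HasFDerivAt f (fderiv ℝ f p) p := by
      filter_upwards [hSopen.mem_nhds hxS] with p hp using (hdf p hp).hasFDerivAt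
    exact fun v w => second_derivative_symmetric_of_eventually hev hdf'.hasFDerivAt v w
  -- transfer to the deriv statements
  have hps : deriv (φ r) s = fderiv ℝ f (r, s) (0, 1) := (hvert (r, s) hxS).deriv
  have hpr : deriv (fun t => φ t s) r = fderiv ℝ f (r, s) (1, 0) := (hhor (r, s) hxS).deriv
  have hev_s : deriv (φ r) =ᶠ[nhds s] (fun y => fderiv ℝ f (r, y) (0, 1)) := by
    filter_upwards [hnbhd_s] with y hy using (hvert (r, y) hy).deriv
  have hφssD : HasDerivAt (deriv (φ r)) (B (0, 1) (0, 1)) s := hBss.congr_of_eventuallyEq hev_s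
  have hpss : deriv (deriv (φ r)) s = B (0, 1) (0, 1) := hφssD.deriv
  have hmix_sD : HasDerivAt (fun y => deriv (fun t => φ t y) r) (B (0, 1) (1, 0)) s := by
    have hev : (fun y => deriv (fun t => φ t y) r) =ᶠ[nhds s] fun y => fderiv ℝ f (r, y) (1, 0) := by
      filter_upwards [hnbhd_s] with y hy using (hhor (r, y) hy).deriv
    exact hBrs.congr_of_eventuallyEq hev
  have hmix_r : deriv (fun t => deriv (φ t) s) r = B (1, 0) (0, 1) := by
    have hev : (fun t => deriv (φ t) s) =ᶠ[nhds r] fun t => fderiv ℝ f (t, s) (0, 1) := by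
      filter_upwards [hnbhd_r] with t ht using (hvert (t, s) ht).deriv
    exact (hBsr.congr_of_eventuallyEq hev).deriv
  have hφsD : HasDerivAt (fun y => φ r y) (fderiv ℝ f (r, s) (0, 1)) s := hvert (r, s) hxS
  -- deriv of U r at s
  have hdU' : deriv (U r) s =
      ((φ r s - s * fderiv ℝ f (r, s) (0, 1) + (r ^ 2 - s ^ 2) * B (0, 1) (0, 1)) * φ r s
        - (s * φ r s + (r ^ 2 - s ^ 2) * fderiv ℝ f (r, s) (0, 1)) * fderiv ℝ f (r, s) (0, 1))
        / (φ r s) ^ 2 := by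
    have hfun : U r = fun y => (y * φ r y + (r ^ 2 - y ^ 2) * deriv (φ r) y) / φ r y :=
      funext fun y => hU r y
    rw [hfun]
    have hnum := ((hasDerivAt_id' s).mul hφsD).add
      (((hasDerivAt_const s (r ^ 2)).sub (hasDerivAt_pow 2 s)).mul hφssD)
    have h := hnum.div hφsD hp0
    erw [h.deriv]
    simp only [Pi.mul_apply, Pi.add_apply, Pi.sub_apply]
    rw [hps]
    push_cast
    ring
  have hdW' : deriv (W r) s =
      ((fderiv ℝ f (r, s) (1, 0) + s * B (1, 0) (0, 1) + r * B (0, 1) (0, 1)) * φ r s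
        - (s * fderiv ℝ f (r, s) (1, 0) + r * fderiv ℝ f (r, s) (0, 1)) * fderiv ℝ f (r, s) (0, 1))
        / (φ r s) ^ 2 := by
    have hfun : W r = fun y => (y * deriv (fun t => φ t y) r + r * deriv (φ r) y) / φ r y :=
      funext fun y => hW r y
    rw [hfun]
    have hnum := ((hasDerivAt_id' s).mul hmix_sD).add ((hasDerivAt_const s r).mul hφssD)
    have h := hnum.div hφsD hp0
    erw [h.deriv]
    simp only [Pi.mul_apply, Pi.add_apply, Pi.sub_apply]
    rw [hps, hpr, hsymm (1, 0) (0, 1)]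
    push_cast
    ring
  -- assemble via the algebraic lemma
  have hT' := hnz r hrI s hs0 hsr
  rw [hps, hpss] at hT'
  have hU' := hU r s
  rw [hps] at hU'
  have hW' := hW r s
  rw [hps, hpr] at hW'
  have hQ' := hQ r s
  rw [hps, hpr, hpss, hmix_r] at hQ'
  have hD' := hD
  rw [hU r s, hps] at hD' ⊢
  exact alg2 (φ r s) (fderiv ℝ f (r, s) (1, 0)) (fderiv ℝ f (r, s) (0, 1))
    (B (0, 1) (0, 1)) (B (1, 0) (0, 1)) r s _ (W r s) (Q r s) (deriv (U r) s) (deriv (W r) s)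
    hp0 hrne hsne hT' rfl hW' hQ' hdU' hdW' hD'
end

section
/- Fix a real number r > 0 and real parameters f₁, f₂, c₀, c₁, c₂, and define for s ∈ (−r, r): P(s) = f₁s + f₂√(r² − s²), Q(s) = c₀ + c₂s² + c₁s√(r² − s²), D(s) = √(r² − s²)(f₁s² − 2c₀(r² − s²) + 1) + c₁r²s³ + f₂(r² − s²)s − c₁r⁴s, U(s) = [s√(r² − s²)(r²f₁ + 1) + 2r²f₂(r² − s²)]/D(s), and W(s) = 2r(P(s) + U(s)Q(s)). Then at every s ∈ (−r, r) with s ≠ 0, D(s) ≠ 0 and U(s)² − sU(s) + (r² − s²)U′(s) ≠ 0 (primes denote d/ds), the identity Q = (1/(2rs))·(2rU − 2rs − 2r²W + s(r² − s²)W′ + s²W + sUW)/(U² − sU + (r² − s²)U′) holds. -/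
/-!
Substituting `W = 2r(P + UQ)` into the identity, the terms containing `U′` cancel and what
remains is the linear equation `U·L = R` with
`L = 1 + sP − 2(r² − s²)Q + s(r² − s²)Q′` and `R = s + (2r² − s²)P − s(r² − s²)P′`.
For the given `P` and `Q`, writing `t = √(r² − s²)`, one has `D = t·L` and that the numerator
of `U` is `t·R`, so `U = R/L` solves it.
-/

theorem spray_Q_eq_of_U_linear {K : Type*} [Field K] [CharZero K]
    {r s P P' Q Q' U U' W W' : K} (hr : r ≠ 0) (hs : s ≠ 0)
    (hden : U ^ 2 - s * U + (r ^ 2 - s ^ 2) * U' ≠ 0)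
    (hU : U * (1 + s * P - 2 * (r ^ 2 - s ^ 2) * Q + s * (r ^ 2 - s ^ 2) * Q')
      = s + (2 * r ^ 2 - s ^ 2) * P - s * (r ^ 2 - s ^ 2) * P')
    (hW : W = 2 * r * (P + U * Q)) (hW' : W' = 2 * r * (P' + (U' * Q + U * Q'))) :
    Q = 1 / (2 * r * s) * ((2 * r * U - 2 * r * s - 2 * r ^ 2 * W + s * (r ^ 2 - s ^ 2) * W'
      + s ^ 2 * W + s * U * W) / (U ^ 2 - s * U + (r ^ 2 - s ^ 2) * U')) := by
  rw [one_div_mul_eq_div, div_div, eq_div_iff (mul_ne_zero hden (by simp [hr, hs])), hW, hW']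
  linear_combination (-2 * r) * hU

theorem explicitU_solves_linear {K : Type*} [Field K]
    {r s t f₁ f₂ c₀ c₁ c₂ P P' Q Q' D U : K} (ht : t ≠ 0) (ht2 : t ^ 2 = r ^ 2 - s ^ 2)
    (hP : P = f₁ * s + f₂ * t) (hP' : P' = f₁ + f₂ * (-s / t))
    (hQ : Q = c₀ + c₂ * s ^ 2 + c₁ * s * t) (hQ' : Q' = c₂ * (2 * s) + c₁ * (t + s * (-s / t)))
    (hD : D = t * (f₁ * s ^ 2 - 2 * c₀ * (r ^ 2 - s ^ 2) + 1)
      + c₁ * r ^ 2 * s ^ 3 + f₂ * (r ^ 2 - s ^ 2) * s - c₁ * r ^ 4 * s) (hD0 : D ≠ 0)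
    (hU : U = (s * t * (r ^ 2 * f₁ + 1) + 2 * r ^ 2 * f₂ * (r ^ 2 - s ^ 2)) / D) :
    U * (1 + s * P - 2 * (r ^ 2 - s ^ 2) * Q + s * (r ^ 2 - s ^ 2) * Q')
      = s + (2 * r ^ 2 - s ^ 2) * P - s * (r ^ 2 - s ^ 2) * P' := by
  have hD_eq : D = t * (1 + s * P - 2 * (r ^ 2 - s ^ 2) * Q + s * (r ^ 2 - s ^ 2) * Q') := by
    rw [hD, hP, hQ, hQ']
    field_simp
    linear_combination (c₁ * s * (r ^ 2 - s ^ 2) - f₂ * s) * ht2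
  have hnum_eq : s * t * (r ^ 2 * f₁ + 1) + 2 * r ^ 2 * f₂ * (r ^ 2 - s ^ 2)
      = t * (s + (2 * r ^ 2 - s ^ 2) * P - s * (r ^ 2 - s ^ 2) * P') := by
    rw [hP, hP']
    field_simp
    linear_combination (-f₂ * (2 * r ^ 2 - s ^ 2)) * ht2
  rw [hD_eq] at hD0
  rw [hU, hnum_eq, hD_eq, mul_div_mul_left _ _ ht, div_mul_cancel₀ _ (right_ne_zero_of_mul hD0)]

theorem hasDerivAt_sqrt_sq_sub {r s : ℝ} (h : s ^ 2 < r ^ 2) :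
    HasDerivAt (fun x => √(r ^ 2 - x ^ 2)) (-s / √(r ^ 2 - s ^ 2)) s := by
  convert ((hasDerivAt_pow 2 s).const_sub (r ^ 2)).sqrt (sub_ne_zero.2 h.ne') using 1
  field_simp
  ring

/-- the explicit `U` solves the second spray-coefficient equation:
`Q = (1/(2rs))·(2rU − 2rs − 2r²W + s(r² − s²)W′ + s²W + sUW)/(U² − sU + (r² − s²)U′)`
where `W = 2r(P + UQ)`, for `P = f₁s + f₂√(r² − s²)`, `Q = c₀ + c₂s² + c₁s√(r² − s²)`. -/
theorem stmt_7 (r : ℝ) (hr : 0 < r) (f₁ f₂ c₀ c₁ c₂ : ℝ) (P Q D U W : ℝ → ℝ)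
    (hP : ∀ s, P s = f₁ * s + f₂ * Real.sqrt (r ^ 2 - s ^ 2))
    (hQ : ∀ s, Q s = c₀ + c₂ * s ^ 2 + c₁ * s * Real.sqrt (r ^ 2 - s ^ 2))
    (hD : ∀ s, D s = Real.sqrt (r ^ 2 - s ^ 2) * (f₁ * s ^ 2 - 2 * c₀ * (r ^ 2 - s ^ 2) + 1)
      + c₁ * r ^ 2 * s ^ 3 + f₂ * (r ^ 2 - s ^ 2) * s - c₁ * r ^ 4 * s)
    (hU : ∀ s, U s = (s * Real.sqrt (r ^ 2 - s ^ 2) * (r ^ 2 * f₁ + 1)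
      + 2 * r ^ 2 * f₂ * (r ^ 2 - s ^ 2)) / D s)
    (hW : ∀ s, W s = 2 * r * (P s + U s * Q s)) :
    ∀ s ∈ Set.Ioo (-r) r, s ≠ 0 → D s ≠ 0 →
      (U s) ^ 2 - s * U s + (r ^ 2 - s ^ 2) * deriv U s ≠ 0 →
      Q s = (1 / (2 * r * s)) *
        ((2 * r * U s - 2 * r * s - 2 * r ^ 2 * W s + s * (r ^ 2 - s ^ 2) * deriv W s
            + s ^ 2 * W s + s * U s * W s)
          / ((U s) ^ 2 - s * U s + (r ^ 2 - s ^ 2) * deriv U s)) := by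
  intro s hs hs0 hD0 hden
  have hsr : s ^ 2 < r ^ 2 := sq_lt_sq' hs.1 hs.2
  have hpos : 0 < r ^ 2 - s ^ 2 := sub_pos.2 hsr
  have hsqrt := hasDerivAt_sqrt_sq_sub hsr
  have hPd : HasDerivAt P (f₁ + f₂ * (-s / √(r ^ 2 - s ^ 2))) s := by
    rw [funext hP]
    exact (((hasDerivAt_id' s).const_mul f₁).add (hsqrt.const_mul f₂)).congr_deriv (by ring)
  have hQd : HasDerivAt Q
      (c₂ * (2 * s) + c₁ * (√(r ^ 2 - s ^ 2) + s * (-s / √(r ^ 2 - s ^ 2)))) s := by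
    rw [funext hQ]
    exact ((((hasDerivAt_pow 2 s).const_mul c₂).const_add c₀).add
      (((hasDerivAt_id' s).const_mul c₁).mul hsqrt)).congr_deriv (by ring)
  have hUd : DifferentiableAt ℝ U s := by
    have hrs := hpos.ne'
    have hDd : DifferentiableAt ℝ D s := by
      rw [funext hD]
      fun_prop (disch := assumption)
    rw [funext hU]
    fun_prop (disch := assumption)
  have hWd := ((hPd.add (hUd.hasDerivAt.mul hQd)).const_mul (2 * r)).congr_of_eventuallyEq
    (.of_forall hW)
  exact spray_Q_eq_of_U_linear hr.ne' hs0 hden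
    (explicitU_solves_linear (Real.sqrt_pos.2 hpos).ne' (Real.sq_sqrt hpos.le) (hP s) rfl
      (hQ s) rfl (hD s) hD0 (hU s))
    (hW s) hWd.deriv
end

section
/- Fix a real number r > 0 and real parameters f₁, f₂, c₀, c₁, c₂, and define for s ∈ (−r, r): P(s) = f₁s + f₂√(r² − s²) and Q(s) = c₀ + c₂s² + c₁s√(r² − s²). Then for every s ∈ (−r, r) (primes denote d/ds): 3(P − sP′) + (r² − s²)(Q′ − sQ″) = (c₁r² + 3f₂)·r²/√(r² − s²). In particular, if f₂ ≠ −r²c₁/3, then 3(P − sP′) + (r² − s²)(Q′ − sQ″) ≠ 0 for every s ∈ (−r, r). -/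
/-!
Write `w = √(a - s²)` with `a = r²`, so that `w' = -s/w`. Then `P - sP' = f₂(w + s²/w) = f₂a/w`,
`Q' = 2c₂s + c₁(a - 2s²)/w` and `Q'' = 2c₂ + c₁s(2s² - 3a)/w³`; the `c₂`-terms cancel in `Q' - sQ''`
and `(a - s²)(Q' - sQ'') = c₁a²/w`. Summing gives `(c₁a + 3f₂)a/w`.
-/

open Real Filter Topology

section SqrtConstSubSq

variable {a s : ℝ}

theorem hasDerivAt_sqrt_const_sub_sq (h : a - s ^ 2 ≠ 0) :
    HasDerivAt (fun t => √(a - t ^ 2)) (-s / √(a - s ^ 2)) s := by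
  have hinner : HasDerivAt (fun t : ℝ => a - t ^ 2) (-(2 * s)) s := by
    simpa using (hasDerivAt_pow 2 s).const_sub a
  refine ((hasDerivAt_sqrt h).comp s hinner).congr_deriv ?_
  ring

variable (f₁ f₂ c₀ c₁ c₂ : ℝ)

theorem hasDerivAt_linear_add_sqrt (h : a - s ^ 2 ≠ 0) :
    HasDerivAt (fun t => f₁ * t + f₂ * √(a - t ^ 2)) (f₁ - f₂ * s / √(a - s ^ 2)) s := by
  refine (((hasDerivAt_id' s).const_mul f₁).add
    ((hasDerivAt_sqrt_const_sub_sq h).const_mul f₂)).congr_deriv ?_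
  ring

theorem hasDerivAt_quadratic_add_mul_sqrt (h : 0 < a - s ^ 2) :
    HasDerivAt (fun t => c₀ + c₂ * t ^ 2 + c₁ * t * √(a - t ^ 2))
      (2 * c₂ * s + c₁ * (a - 2 * s ^ 2) / √(a - s ^ 2)) s := by
  have hw : √(a - s ^ 2) ≠ 0 := (sqrt_pos.mpr h).ne'
  have hw2 : √(a - s ^ 2) ^ 2 = a - s ^ 2 := sq_sqrt h.le
  have hquad : HasDerivAt (fun t : ℝ => c₀ + c₂ * t ^ 2) (c₂ * (2 * s)) s := by
    simpa using ((hasDerivAt_pow 2 s).const_mul c₂).const_add c₀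
  refine (hquad.add (((hasDerivAt_id' s).const_mul c₁).mul
    (hasDerivAt_sqrt_const_sub_sq h.ne'))).congr_deriv ?_
  field_simp
  linear_combination c₁ * hw2

theorem hasDerivAt_linear_add_div_sqrt (h : 0 < a - s ^ 2) :
    HasDerivAt (fun t => 2 * c₂ * t + c₁ * (a - 2 * t ^ 2) / √(a - t ^ 2))
      (2 * c₂ + c₁ * s * (2 * s ^ 2 - 3 * a) / √(a - s ^ 2) ^ 3) s := by
  have hw : √(a - s ^ 2) ≠ 0 := (sqrt_pos.mpr h).ne'
  have hw2 : √(a - s ^ 2) ^ 2 = a - s ^ 2 := sq_sqrt h.le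
  have hnum : HasDerivAt (fun t : ℝ => c₁ * (a - 2 * t ^ 2)) (c₁ * -(2 * (2 * s))) s := by
    simpa using (((hasDerivAt_pow 2 s).const_mul 2).const_sub a).const_mul c₁
  refine (((hasDerivAt_id' s).const_mul (2 * c₂)).add
    (hnum.div (hasDerivAt_sqrt_const_sub_sq h.ne') hw)).congr_deriv ?_
  field_simp
  linear_combination (-4 * c₁ * s) * hw2

theorem deriv_deriv_quadratic_add_mul_sqrt (h : 0 < a - s ^ 2) :
    deriv (deriv fun t => c₀ + c₂ * t ^ 2 + c₁ * t * √(a - t ^ 2)) s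
      = 2 * c₂ + c₁ * s * (2 * s ^ 2 - 3 * a) / √(a - s ^ 2) ^ 3 := by
  have hopen : IsOpen {t : ℝ | 0 < a - t ^ 2} :=
    isOpen_lt continuous_const (continuous_const.sub (continuous_pow 2))
  have hderiv : (deriv fun t => c₀ + c₂ * t ^ 2 + c₁ * t * √(a - t ^ 2))
      =ᶠ[𝓝 s] fun t => 2 * c₂ * t + c₁ * (a - 2 * t ^ 2) / √(a - t ^ 2) := by
    filter_upwards [hopen.mem_nhds h] with t ht
    exact (hasDerivAt_quadratic_add_mul_sqrt c₀ c₁ c₂ ht).deriv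
  rw [hderiv.deriv_eq]
  exact (hasDerivAt_linear_add_div_sqrt c₁ c₂ h).deriv

theorem mean_berwald_criterion_eq (h : 0 < a - s ^ 2) :
    3 * (f₁ * s + f₂ * √(a - s ^ 2) - s * deriv (fun t => f₁ * t + f₂ * √(a - t ^ 2)) s)
      + (a - s ^ 2) * (deriv (fun t => c₀ + c₂ * t ^ 2 + c₁ * t * √(a - t ^ 2)) s
        - s * deriv (deriv fun t => c₀ + c₂ * t ^ 2 + c₁ * t * √(a - t ^ 2)) s)
      = (c₁ * a + 3 * f₂) * a / √(a - s ^ 2) := by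
  rw [(hasDerivAt_linear_add_sqrt f₁ f₂ h.ne').deriv,
    (hasDerivAt_quadratic_add_mul_sqrt c₀ c₁ c₂ h).deriv,
    deriv_deriv_quadratic_add_mul_sqrt c₀ c₁ c₂ h]
  have hw : √(a - s ^ 2) ≠ 0 := (sqrt_pos.mpr h).ne'
  have hw2 : √(a - s ^ 2) ^ 2 = a - s ^ 2 := sq_sqrt h.le
  field_simp
  generalize √(a - s ^ 2) = w at hw2 ⊢
  obtain rfl : a = w ^ 2 + s ^ 2 := by linarith
  ring

end SqrtConstSubSq

theorem stmt_9_general (r : ℝ) (f₁ f₂ c₀ c₁ c₂ : ℝ) (P Q : ℝ → ℝ)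
    (hP : ∀ s, P s = f₁ * s + f₂ * Real.sqrt (r ^ 2 - s ^ 2))
    (hQ : ∀ s, Q s = c₀ + c₂ * s ^ 2 + c₁ * s * Real.sqrt (r ^ 2 - s ^ 2)) :
    (∀ s ∈ Set.Ioo (-r) r,
        3 * (P s - s * deriv P s)
          + (r ^ 2 - s ^ 2) * (deriv Q s - s * deriv (deriv Q) s)
        = (c₁ * r ^ 2 + 3 * f₂) * r ^ 2 / Real.sqrt (r ^ 2 - s ^ 2)) ∧
      (f₂ ≠ -(r ^ 2 * c₁) / 3 → ∀ s ∈ Set.Ioo (-r) r,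
        3 * (P s - s * deriv P s)
          + (r ^ 2 - s ^ 2) * (deriv Q s - s * deriv (deriv Q) s) ≠ 0) := by
  have hpos : ∀ s ∈ Set.Ioo (-r) r, 0 < r ^ 2 - s ^ 2 := fun s hs =>
    sub_pos.2 (sq_lt_sq' hs.1 hs.2)
  obtain rfl : P = fun t => f₁ * t + f₂ * √(r ^ 2 - t ^ 2) := funext hP
  obtain rfl : Q = fun t => c₀ + c₂ * t ^ 2 + c₁ * t * √(r ^ 2 - t ^ 2) := funext hQ
  have hexpr := fun s hs => mean_berwald_criterion_eq f₁ f₂ c₀ c₁ c₂ (hpos s hs)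
  refine ⟨hexpr, fun hf₂ s hs => ?_⟩
  rw [hexpr s hs]
  have hcoeff : c₁ * r ^ 2 + 3 * f₂ ≠ 0 := fun h => hf₂ (by linarith)
  have hr2 : r ^ 2 ≠ 0 := (lt_of_le_of_lt (sq_nonneg s) (sub_pos.1 (hpos s hs))).ne'
  exact div_ne_zero (mul_ne_zero hcoeff hr2) (sqrt_pos.2 (hpos s hs)).ne'

/-- for `P(s) = f₁s + f₂√(r² − s²)` and `Q(s) = c₀ + c₂s² + c₁s√(r² − s²)`,
`3(P − sP′) + (r² − s²)(Q′ − sQ″) = (c₁r² + 3f₂)r²/√(r² − s²)` on `(−r, r)`; in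
particular, if `f₂ ≠ −r²c₁/3` this quantity never vanishes on `(−r, r)`. -/
theorem stmt_9 (r : ℝ) (hr : 0 < r) (f₁ f₂ c₀ c₁ c₂ : ℝ) (P Q : ℝ → ℝ)
    (hP : ∀ s, P s = f₁ * s + f₂ * Real.sqrt (r ^ 2 - s ^ 2))
    (hQ : ∀ s, Q s = c₀ + c₂ * s ^ 2 + c₁ * s * Real.sqrt (r ^ 2 - s ^ 2)) :
    (∀ s ∈ Set.Ioo (-r) r,
        3 * (P s - s * deriv P s)
          + (r ^ 2 - s ^ 2) * (deriv Q s - s * deriv (deriv Q) s)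
        = (c₁ * r ^ 2 + 3 * f₂) * r ^ 2 / Real.sqrt (r ^ 2 - s ^ 2)) ∧
      (f₂ ≠ -(r ^ 2 * c₁) / 3 → ∀ s ∈ Set.Ioo (-r) r,
        3 * (P s - s * deriv P s)
          + (r ^ 2 - s ^ 2) * (deriv Q s - s * deriv (deriv Q) s) ≠ 0) :=
  stmt_9_general r f₁ f₂ c₀ c₁ c₂ P Q hP hQ
end

section
/- Let I ⊆ (0,∞) be an open interval, let D = {(r,s) : r ∈ I, |s| < r}, and let φ : D → ℝ be a smooth positive function with φ − sφ_s > 0 and φ − sφ_s + (r² − s²)φ_ss > 0 on D. Let f₁, f₂, g, c₀, c₁, c₂ be smooth functions on I, and suppose that on D: −(1/φ)(sφ + (r² − s²)φ_s)Q + (1/(2rφ))(sφ_r + rφ_s) = P and (1/(2r))·(−φ_r + sφ_{rs} + rφ_{ss})/(φ − sφ_s + (r² − s²)φ_{ss}) = Q, where P(r,s) = f₁(r)s + f₂(r)√(r² − s²) + g(r) and Q(r,s) = c₀(r) + c₂(r)s² + c₁(r)s√(r² − s²) + g(r). If moreover (r² − s²)L₁ + 3L₂ = 0 on D, where L₁ =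 3φ_sP_ss + φP_sss + (sφ + (r² − s²)φ_s)Q_sss and L₂ = −sφP_ss + φ_s(P − sP_s) + (sφ + (r² − s²)φ_s)(Q_s − sQ_ss), then for every r ∈ I either g(r) = 0, or f₂(r) = 0 and c₁(r) = 0. -/
private lemma hasDeriv_sqrt (r s : ℝ) (h : s^2 < r^2) :
    HasDerivAt (fun t : ℝ => Real.sqrt (r^2 - t^2)) (-s / Real.sqrt (r^2 - s^2)) s := by
  have hpos : 0 < r^2 - s^2 := by linarith
  have hD : HasDerivAt (fun t : ℝ => r^2 - t^2) (-(2*s)) s := by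
    simpa using ((hasDerivAt_pow 2 s).const_sub (r^2))
  have h2 := (Real.hasDerivAt_sqrt hpos.ne').comp s hD
  have hw : 0 < Real.sqrt (r^2 - s^2) := Real.sqrt_pos.mpr hpos
  refine (h2).congr_deriv ?_
  field_simp

private lemma derivs_P (r f₁ f₂ g : ℝ) (P : ℝ → ℝ)
    (hP : ∀ s, P s = f₁ * s + f₂ * Real.sqrt (r^2 - s^2) + g) :
    ∀ s : ℝ, s^2 < r^2 →
      deriv P s = f₁ + f₂ * (-s / Real.sqrt (r^2 - s^2)) ∧
      deriv (deriv P) s = f₂ * (-r^2 / (Real.sqrt (r^2 - s^2))^3) ∧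
      deriv (deriv (deriv P)) s = f₂ * (-(3*r^2*s) / (Real.sqrt (r^2 - s^2))^5) := by
  have hU : IsOpen {s : ℝ | s^2 < r^2} := isOpen_lt (by fun_prop) continuous_const
  have h1 : ∀ s : ℝ, s^2 < r^2 →
      HasDerivAt P (f₁ + f₂ * (-s / Real.sqrt (r^2 - s^2))) s := by
    intro s hs
    have hb : HasDerivAt (fun t => f₁ * t + f₂ * Real.sqrt (r^2 - t^2) + g)
        (f₁ * 1 + f₂ * (-s / Real.sqrt (r^2 - s^2))) s :=
      (((hasDerivAt_id s).const_mul f₁).add ((hasDeriv_sqrt r s hs).const_mul f₂)).add_const g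
    have := hb.congr_of_eventuallyEq (Filter.Eventually.of_forall hP)
    refine (this).congr_deriv ?_; ring
  have e1 : ∀ s : ℝ, s^2 < r^2 →
      deriv P s = f₁ + f₂ * (-s / Real.sqrt (r^2 - s^2)) := fun s hs => (h1 s hs).deriv
  have h2 : ∀ s : ℝ, s^2 < r^2 →
      HasDerivAt (fun t => f₁ + f₂ * (-t / Real.sqrt (r^2 - t^2)))
        (f₂ * (-r^2 / (Real.sqrt (r^2 - s^2))^3)) s := by
    intro s hs
    have hpos : 0 < r^2 - s^2 := by linarith
    have hw : 0 < Real.sqrt (r^2 - s^2) := Real.sqrt_pos.mpr hpos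
    have hw2 : Real.sqrt (r^2 - s^2)^2 = r^2 - s^2 := Real.sq_sqrt hpos.le
    have hdiv : HasDerivAt (fun t => -t / Real.sqrt (r^2 - t^2))
        (((-1) * Real.sqrt (r^2 - s^2) - (-s) * (-s / Real.sqrt (r^2 - s^2))) /
          (Real.sqrt (r^2 - s^2))^2) s :=
      ((hasDerivAt_id s).neg.div (hasDeriv_sqrt r s hs) hw.ne')
    have hb := (hdiv.const_mul f₂).const_add f₁
    refine (hb).congr_deriv ?_
    set w := Real.sqrt (r^2 - s^2) with hwdef
    rw [show r^2 = w^2 + s^2 by rw [hw2]; ring]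
    field_simp; ring
  have e2 : ∀ s : ℝ, s^2 < r^2 →
      deriv (deriv P) s = f₂ * (-r^2 / (Real.sqrt (r^2 - s^2))^3) := by
    intro s hs
    have heq : deriv P =ᶠ[nhds s] fun t => f₁ + f₂ * (-t / Real.sqrt (r^2 - t^2)) :=
      Filter.eventuallyEq_of_mem (hU.mem_nhds hs) (fun t ht => e1 t ht)
    rw [heq.deriv_eq]; exact (h2 s hs).deriv
  have h3 : ∀ s : ℝ, s^2 < r^2 →
      HasDerivAt (fun t => f₂ * (-r^2 / (Real.sqrt (r^2 - t^2))^3))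
        (f₂ * (-(3*r^2*s) / (Real.sqrt (r^2 - s^2))^5)) s := by
    intro s hs
    have hpos : 0 < r^2 - s^2 := by linarith
    have hw : 0 < Real.sqrt (r^2 - s^2) := Real.sqrt_pos.mpr hpos
    have hw2 : Real.sqrt (r^2 - s^2)^2 = r^2 - s^2 := Real.sq_sqrt hpos.le
    have hpow : HasDerivAt (fun t => (Real.sqrt (r^2 - t^2))^3)
        (3 * (Real.sqrt (r^2 - s^2))^2 * (-s / Real.sqrt (r^2 - s^2))) s := by
      simpa using (hasDeriv_sqrt r s hs).fun_pow 3
    have hdiv := ((hasDerivAt_const s (-r^2)).div hpow (by positivity)).const_mul f₂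
    refine (hdiv).congr_deriv ?_
    set w := Real.sqrt (r^2 - s^2) with hwdef
    rw [show r^2 = w^2 + s^2 by rw [hw2]; ring]
    field_simp; ring
  have e3 : ∀ s : ℝ, s^2 < r^2 →
      deriv (deriv (deriv P)) s = f₂ * (-(3*r^2*s) / (Real.sqrt (r^2 - s^2))^5) := by
    intro s hs
    have heq : deriv (deriv P) =ᶠ[nhds s] fun t => f₂ * (-r^2 / (Real.sqrt (r^2 - t^2))^3) :=
      Filter.eventuallyEq_of_mem (hU.mem_nhds hs) (fun t ht => e2 t ht)
    rw [heq.deriv_eq]; exact (h3 s hs).deriv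
  exact fun s hs => ⟨e1 s hs, e2 s hs, e3 s hs⟩

private lemma derivs_Q (r c₀ c₁ c₂ g : ℝ) (Q : ℝ → ℝ)
    (hQ : ∀ s, Q s = c₀ + c₂ * s^2 + c₁ * s * Real.sqrt (r^2 - s^2) + g) :
    ∀ s : ℝ, s^2 < r^2 →
      deriv Q s = 2*c₂*s + c₁ * ((r^2 - 2*s^2) / Real.sqrt (r^2 - s^2)) ∧
      deriv (deriv Q) s = 2*c₂ + c₁ * (s*(2*s^2 - 3*r^2) / (Real.sqrt (r^2 - s^2))^3) ∧
      deriv (deriv (deriv Q)) s = c₁ * (-(3*r^2*r^2) / (Real.sqrt (r^2 - s^2))^5) := by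
  have hU : IsOpen {s : ℝ | s^2 < r^2} := isOpen_lt (by fun_prop) continuous_const
  have h1 : ∀ s : ℝ, s^2 < r^2 →
      HasDerivAt Q (2*c₂*s + c₁ * ((r^2 - 2*s^2) / Real.sqrt (r^2 - s^2))) s := by
    intro s hs
    have hpos : 0 < r^2 - s^2 := by linarith
    have hw : 0 < Real.sqrt (r^2 - s^2) := Real.sqrt_pos.mpr hpos
    have hw2 : Real.sqrt (r^2 - s^2)^2 = r^2 - s^2 := Real.sq_sqrt hpos.le
    have hpow2 : HasDerivAt (fun t : ℝ => t^2) (2*s) s := by simpa using hasDerivAt_pow 2 s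
    have hb : HasDerivAt (fun t => c₀ + c₂*t^2 + c₁*(t*Real.sqrt (r^2 - t^2)) + g)
        (c₂*(2*s) + c₁*(1*Real.sqrt (r^2 - s^2) + s*(-s/Real.sqrt (r^2 - s^2)))) s :=
      (((hpow2.const_mul c₂).const_add c₀).add
        (((hasDerivAt_id s).mul (hasDeriv_sqrt r s hs)).const_mul c₁)).add_const g
    have hQe : Q = fun t => c₀ + c₂*t^2 + c₁*(t*Real.sqrt (r^2 - t^2)) + g :=
      funext fun t => by rw [hQ t]; ring
    rw [hQe]
    refine (hb).congr_deriv ?_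
    set w := Real.sqrt (r^2 - s^2) with hwdef
    rw [show r^2 = w^2 + s^2 by rw [hw2]; ring]
    field_simp; ring
  have e1 : ∀ s : ℝ, s^2 < r^2 →
      deriv Q s = 2*c₂*s + c₁ * ((r^2 - 2*s^2) / Real.sqrt (r^2 - s^2)) :=
    fun s hs => (h1 s hs).deriv
  have h2 : ∀ s : ℝ, s^2 < r^2 →
      HasDerivAt (fun t => 2*c₂*t + c₁ * ((r^2 - 2*t^2) / Real.sqrt (r^2 - t^2)))
        (2*c₂ + c₁ * (s*(2*s^2 - 3*r^2) / (Real.sqrt (r^2 - s^2))^3)) s := by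
    intro s hs
    have hpos : 0 < r^2 - s^2 := by linarith
    have hw : 0 < Real.sqrt (r^2 - s^2) := Real.sqrt_pos.mpr hpos
    have hw2 : Real.sqrt (r^2 - s^2)^2 = r^2 - s^2 := Real.sq_sqrt hpos.le
    have hnum : HasDerivAt (fun t : ℝ => r^2 - 2*t^2) (-(4*s)) s := by
      refine ((((hasDerivAt_pow 2 s).const_mul 2).const_sub (r^2))).congr_deriv ?_
      push_cast; ring
    have hb : HasDerivAt (fun t => 2*c₂*t + c₁ * ((r^2 - 2*t^2) / Real.sqrt (r^2 - t^2)))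
        (2*c₂*1 + c₁*((-(4*s)*Real.sqrt (r^2 - s^2) - (r^2 - 2*s^2)*(-s/Real.sqrt (r^2 - s^2)))
          / (Real.sqrt (r^2 - s^2))^2)) s :=
      ((hasDerivAt_id s).const_mul (2*c₂)).add
        ((hnum.div (hasDeriv_sqrt r s hs) hw.ne').const_mul c₁)
    refine (hb).congr_deriv ?_
    set w := Real.sqrt (r^2 - s^2) with hwdef
    rw [show r^2 = w^2 + s^2 by rw [hw2]; ring]
    field_simp; ring
  have e2 : ∀ s : ℝ, s^2 < r^2 →
      deriv (deriv Q) s = 2*c₂ + c₁ * (s*(2*s^2 - 3*r^2) / (Real.sqrt (r^2 - s^2))^3) := by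
    intro s hs
    have heq : deriv Q =ᶠ[nhds s]
        fun t => 2*c₂*t + c₁ * ((r^2 - 2*t^2) / Real.sqrt (r^2 - t^2)) :=
      Filter.eventuallyEq_of_mem (hU.mem_nhds hs) (fun t ht => e1 t ht)
    rw [heq.deriv_eq]; exact (h2 s hs).deriv
  have h3 : ∀ s : ℝ, s^2 < r^2 →
      HasDerivAt (fun t => 2*c₂ + c₁ * (t*(2*t^2 - 3*r^2) / (Real.sqrt (r^2 - t^2))^3))
        (c₁ * (-(3*r^2*r^2) / (Real.sqrt (r^2 - s^2))^5)) s := by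
    intro s hs
    have hpos : 0 < r^2 - s^2 := by linarith
    have hw : 0 < Real.sqrt (r^2 - s^2) := Real.sqrt_pos.mpr hpos
    have hw2 : Real.sqrt (r^2 - s^2)^2 = r^2 - s^2 := Real.sq_sqrt hpos.le
    have hquad : HasDerivAt (fun t : ℝ => 2*t^2 - 3*r^2) (4*s) s := by
      refine (((hasDerivAt_pow 2 s).const_mul 2).sub_const (3*r^2)).congr_deriv ?_
      push_cast; ring
    have hnum := (hasDerivAt_id s).mul hquad
    have hpow : HasDerivAt (fun t => (Real.sqrt (r^2 - t^2))^3)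
        (3 * (Real.sqrt (r^2 - s^2))^2 * (-s / Real.sqrt (r^2 - s^2))) s := by
      simpa using (hasDeriv_sqrt r s hs).fun_pow 3
    have hb : HasDerivAt (fun t => 2*c₂ + c₁ * (t*(2*t^2 - 3*r^2) / (Real.sqrt (r^2 - t^2))^3))
        (c₁*(((1*(2*s^2 - 3*r^2) + s*(4*s))*(Real.sqrt (r^2 - s^2))^3
            - s*(2*s^2 - 3*r^2)*(3*(Real.sqrt (r^2 - s^2))^2*(-s/Real.sqrt (r^2 - s^2))))
          / ((Real.sqrt (r^2 - s^2))^3)^2)) s := by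
      exact ((hnum.div hpow (by positivity)).const_mul c₁).const_add (2*c₂)
    refine (hb).congr_deriv ?_
    set w := Real.sqrt (r^2 - s^2) with hwdef
    rw [show r^2 = w^2 + s^2 by rw [hw2]; ring]
    field_simp; ring
  have e3 : ∀ s : ℝ, s^2 < r^2 →
      deriv (deriv (deriv Q)) s = c₁ * (-(3*r^2*r^2) / (Real.sqrt (r^2 - s^2))^5) := by
    intro s hs
    have heq : deriv (deriv Q) =ᶠ[nhds s]
        fun t => 2*c₂ + c₁ * (t*(2*t^2 - 3*r^2) / (Real.sqrt (r^2 - t^2))^3) :=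
      Filter.eventuallyEq_of_mem (hU.mem_nhds hs) (fun t ht => e2 t ht)
    rw [heq.deriv_eq]; exact (h3 s hs).deriv
  exact fun s hs => ⟨e1 s hs, e2 s hs, e3 s hs⟩

/-- Remark 2.8, converse direction: if the spray coefficients of the
spherically symmetric Finsler surface `F = uφ(r,s)` are
`P = f₁(r)s + f₂(r)√(r² − s²) + g(r)` and `Q = c₀(r) + c₂(r)s² + c₁(r)s√(r² − s²) + g(r)`
and the surface is Landsbergian (`(r² − s²)L₁ + 3L₂ = 0` on `D`), then for every `r ∈ I`
either `g(r) = 0` or `f₂(r) = 0 ∧ c₁(r) = 0`. -/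
theorem stmt_10 (a b : ℝ) (ha : 0 ≤ a)
    (φ : ℝ → ℝ → ℝ)
    (hφ : ContDiffOn ℝ (⊤ : ℕ∞) (fun p : ℝ × ℝ => φ p.1 p.2)
      {p : ℝ × ℝ | p.1 ∈ Set.Ioo a b ∧ |p.2| < p.1})
    (hφpos : ∀ r ∈ Set.Ioo a b, ∀ s : ℝ, |s| < r → 0 < φ r s)
    (h1 : ∀ r ∈ Set.Ioo a b, ∀ s : ℝ, |s| < r → 0 < φ r s - s * deriv (φ r) s)
    (h2 : ∀ r ∈ Set.Ioo a b, ∀ s : ℝ, |s| < r →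
      0 < φ r s - s * deriv (φ r) s + (r ^ 2 - s ^ 2) * deriv (deriv (φ r)) s)
    (f₁ f₂ g c₀ c₁ c₂ : ℝ → ℝ)
    (hf₁ : ContDiffOn ℝ (⊤ : ℕ∞) f₁ (Set.Ioo a b)) (hf₂ : ContDiffOn ℝ (⊤ : ℕ∞) f₂ (Set.Ioo a b))
    (hg : ContDiffOn ℝ (⊤ : ℕ∞) g (Set.Ioo a b))
    (hc₀ : ContDiffOn ℝ (⊤ : ℕ∞) c₀ (Set.Ioo a b)) (hc₁ : ContDiffOn ℝ (⊤ : ℕ∞) c₁ (Set.Ioo a b))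
    (hc₂ : ContDiffOn ℝ (⊤ : ℕ∞) c₂ (Set.Ioo a b))
    (P Q : ℝ → ℝ → ℝ)
    (hPdef : ∀ r s, P r s = f₁ r * s + f₂ r * Real.sqrt (r ^ 2 - s ^ 2) + g r)
    (hQdef : ∀ r s, Q r s = c₀ r + c₂ r * s ^ 2 + c₁ r * s * Real.sqrt (r ^ 2 - s ^ 2) + g r)
    (hsprayP : ∀ r ∈ Set.Ioo a b, ∀ s : ℝ, |s| < r →
      -(1 / φ r s) * (s * φ r s + (r ^ 2 - s ^ 2) * deriv (φ r) s) * Q r s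
        + (1 / (2 * r * φ r s)) * (s * deriv (fun t => φ t s) r + r * deriv (φ r) s) = P r s)
    (hsprayQ : ∀ r ∈ Set.Ioo a b, ∀ s : ℝ, |s| < r →
      (1 / (2 * r)) *
        ((-(deriv (fun t => φ t s) r) + s * deriv (fun t => deriv (φ t) s) r
            + r * deriv (deriv (φ r)) s)
          / (φ r s - s * deriv (φ r) s + (r ^ 2 - s ^ 2) * deriv (deriv (φ r)) s)) = Q r s)
    (hLand : ∀ r ∈ Set.Ioo a b, ∀ s : ℝ, |s| < r →
      (r ^ 2 - s ^ 2) *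
          (3 * deriv (φ r) s * deriv (deriv (P r)) s + φ r s * deriv (deriv (deriv (P r))) s
            + (s * φ r s + (r ^ 2 - s ^ 2) * deriv (φ r) s) * deriv (deriv (deriv (Q r))) s)
        + 3 * (-s * φ r s * deriv (deriv (P r)) s + deriv (φ r) s * (P r s - s * deriv (P r) s)
            + (s * φ r s + (r ^ 2 - s ^ 2) * deriv (φ r) s)
              * (deriv (Q r) s - s * deriv (deriv (Q r)) s)) = 0) :
    ∀ r ∈ Set.Ioo a b, g r = 0 ∨ (f₂ r = 0 ∧ c₁ r = 0) := by
  -- Step 1: Landsberg condition forces g r * φ_s = 0 pointwise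
  have key : ∀ r ∈ Set.Ioo a b, g r ≠ 0 → ∀ s : ℝ, |s| < r → deriv (φ r) s = 0 := by
    intro r hr hgr s hs
    have hr0 : 0 < r := lt_of_le_of_lt ha hr.1
    obtain ⟨hsl, hsr⟩ := abs_lt.mp hs
    have hs2 : s^2 < r^2 := sq_lt_sq' hsl hsr
    have hpos : 0 < r^2 - s^2 := by linarith
    have hw : 0 < Real.sqrt (r^2 - s^2) := Real.sqrt_pos.mpr hpos
    have hw2 : Real.sqrt (r^2 - s^2)^2 = r^2 - s^2 := Real.sq_sqrt hpos.le
    obtain ⟨dp1, dp2, dp3⟩ := derivs_P r (f₁ r) (f₂ r) (g r) (P r) (hPdef r) s hs2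
    obtain ⟨dq1, dq2, dq3⟩ := derivs_Q r (c₀ r) (c₁ r) (c₂ r) (g r) (Q r) (hQdef r) s hs2
    have hL := hLand r hr s hs
    rw [dp1, dp2, dp3, dq1, dq2, dq3, hPdef r s] at hL
    have h3 : 3 * g r * deriv (φ r) s = 0 := by
      rw [← hL]
      set w := Real.sqrt (r^2 - s^2) with hwdef
      rw [show r^2 = w^2 + s^2 by rw [hw2]; ring]
      field_simp
      ring
    have : g r * deriv (φ r) s = 0 := by linarith
    rcases mul_eq_zero.mp this with h | h
    · exact absurd h hgr
    · exact h
  intro r hr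
  by_cases hgr : g r = 0
  · exact Or.inl hgr
  have hr0 : 0 < r := lt_of_le_of_lt ha hr.1
  have hzero : ∀ s : ℝ, |s| < r → deriv (φ r) s = 0 := key r hr hgr
  have hdd : ∀ s : ℝ, |s| < r → deriv (deriv (φ r)) s = 0 := by
    intro s hs
    have hU : IsOpen {t : ℝ | |t| < r} := isOpen_lt continuous_abs continuous_const
    have heq : deriv (φ r) =ᶠ[nhds s] fun _ => (0:ℝ) :=
      Filter.eventuallyEq_of_mem (hU.mem_nhds hs) (fun t ht => hzero t ht)
    rw [heq.deriv_eq, deriv_const]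
  have hmix : ∀ s : ℝ, |s| < r → deriv (fun t => deriv (φ t) s) r = 0 := by
    intro s hs
    have hWopen : IsOpen ((Set.Ioo a b ∩ g ⁻¹' ({0}ᶜ)) ∩ Set.Ioi |s|) :=
      (hg.continuousOn.isOpen_inter_preimage isOpen_Ioo isOpen_compl_singleton).inter isOpen_Ioi
    have hmem : r ∈ (Set.Ioo a b ∩ g ⁻¹' ({0}ᶜ)) ∩ Set.Ioi |s| :=
      ⟨⟨hr, by simp [hgr]⟩, hs⟩
    have heq : (fun t => deriv (φ t) s) =ᶠ[nhds r] fun _ => (0:ℝ) :=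
      Filter.eventuallyEq_of_mem (hWopen.mem_nhds hmem)
        (fun t ht => key t ht.1.1 (by simpa using ht.1.2) s ht.2)
    rw [heq.deriv_eq, deriv_const]
  have hPQ : ∀ s : ℝ, |s| < r → P r s + 2*s*Q r s = 0 := by
    intro s hs
    have hX : 0 < φ r s := hφpos r hr s hs
    have e1 := hsprayQ r hr s hs
    rw [hzero s hs, hdd s hs, hmix s hs] at e1
    simp only [mul_zero, add_zero, sub_zero] at e1
    have e2 := hsprayP r hr s hs
    rw [hzero s hs] at e2
    simp only [mul_zero, add_zero] at e2
    have hψ : deriv (fun t => φ t s) r = -(2*r) * φ r s * Q r s := by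
      field_simp at e1
      linarith
    rw [hψ] at e2
    field_simp at e2
    have h0 : 2*r*φ r s*φ r s*(P r s + 2*s*Q r s) = 0 := by linear_combination (-(2*r*φ r s*φ r s)) * e2
    have hne : 2*r*φ r s*φ r s ≠ 0 := by positivity
    exact (mul_eq_zero.mp h0).resolve_left hne
  have hE : ∀ s : ℝ, |s| < r →
      f₁ r * s + f₂ r * Real.sqrt (r^2 - s^2) + g r
        + 2*s*(c₀ r + c₂ r * s^2 + c₁ r * s * Real.sqrt (r^2 - s^2) + g r) = 0 := by
    intro s hs
    have h := hPQ s hs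
    rw [hPdef r s, hQdef r s] at h
    linarith
  have hG : ∀ s : ℝ, |s| < r →
      f₂ r * Real.sqrt (r^2 - s^2) + g r + 2 * c₁ r * s^2 * Real.sqrt (r^2 - s^2) = 0 := by
    intro s hs
    have hA := hE s hs
    have hB := hE (-s) (by rwa [abs_neg])
    rw [show r^2 - (-s)^2 = r^2 - s^2 by ring] at hB
    linear_combination (hA + hB)/2
  have hG0 := hG 0 (by simpa using hr0)
  rw [show r^2 - (0:ℝ)^2 = r^2 by ring, Real.sqrt_sq hr0.le] at hG0
  have hs3 : Real.sqrt 3 ^ 2 = 3 := Real.sq_sqrt (by norm_num)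
  have hs7 : Real.sqrt 7 ^ 2 = 7 := Real.sq_sqrt (by norm_num)
  have hs1abs : |r * Real.sqrt 3 / 2| < r := by
    rw [abs_of_nonneg (by positivity)]
    nlinarith [Real.sqrt_nonneg 3]
  have hs2abs : |r * Real.sqrt 7 / 4| < r := by
    rw [abs_of_nonneg (by positivity)]
    nlinarith [Real.sqrt_nonneg 7]
  have hG1 := hG (r * Real.sqrt 3 / 2) hs1abs
  rw [show r^2 - (r * Real.sqrt 3 / 2)^2 = (r/2)^2 by linear_combination (-(r^2)/4) * hs3,
    Real.sqrt_sq (by positivity)] at hG1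
  have hG2 := hG (r * Real.sqrt 7 / 4) hs2abs
  rw [show r^2 - (r * Real.sqrt 7 / 4)^2 = (3*r/4)^2 by linear_combination (-(r^2)/16) * hs7,
    Real.sqrt_sq (by positivity)] at hG2
  have hG1' : f₂ r * (r/2) + g r + 2 * c₁ r * (3*r^2/4) * (r/2) = 0 := by
    linear_combination hG1 - (2 * c₁ r * (r/2) * (r^2/4)) * hs3
  have hG2' : f₂ r * (3*r/4) + g r + 2 * c₁ r * (7*r^2/16) * (3*r/4) = 0 := by
    linear_combination hG2 - (2 * c₁ r * (3*r/4) * (r^2/16)) * hs7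
  have hkey : c₁ r * r^3 = 0 := by
    linear_combination (16/9) * (2*hG2' - hG1' - hG0)
  have hc1 : c₁ r = 0 :=
    (mul_eq_zero.mp hkey).resolve_right (pow_ne_zero _ hr0.ne')
  have hf2key : f₂ r * r = 0 := by
    linear_combination 2*hG0 - 2*hG1' + (3/2)*r^3*hc1
  have hf2 : f₂ r = 0 := (mul_eq_zero.mp hf2key).resolve_right hr0.ne'
  exact Or.inr ⟨hf2, hc1⟩
end

section
/- Let I ⊆ (0,∞) be an open interval, let c be a real constant, and let c₀ be a smooth function on I with 2r²c₀(r) − 1 ≠ 0 for all r ∈ I. Define on I: f₁(r) = −1/r², f₂(r) = c/r², c₁(r) = −1/r⁴, and c₂(r) = −(4r⁴c₀² + 2r³c₀′ + c²)/(2r⁴(2r²c₀ − 1)) (primes denote d/dr). Then for all r ∈ I the following three equations hold: (i) 6rc₁ + r²c₁′ + 2r³c₁f₁ + 2rf₁f₂ − f₂′ = 0; (ii) 2c₀ + 2r²c₀f₁ + 2r²c₂ + 2r⁴f₁c₂ + r²f₁² − f₁ − rf₁′ = 0; (iii) 4r²c₀² + 2c₀ + 2rc₀′ + 4r⁴c₀c₂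 + 2r²c₀f₁ − r⁶c₁² − 2r²c₂ − f₁ + r²f₂² = 0. -/
lemma deriv_of_eq_on {f g : ℝ → ℝ} {s : Set ℝ} (hs : IsOpen s) {r : ℝ} (hr : r ∈ s)
    (h : ∀ x ∈ s, f x = g x) : deriv f r = deriv g r := by
  apply Filter.EventuallyEq.deriv_eq
  filter_upwards [hs.mem_nhds hr] with x hx using h x hx

lemma deriv_const_div_pow (k : ℝ) (n : ℕ) {r : ℝ} (hr : r ≠ 0) :
    deriv (fun x : ℝ => k / x ^ n) r = -(k * n * r ^ (n - 1)) / (r ^ n) ^ 2 := by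
  have h := ((hasDerivAt_const r k).div (hasDerivAt_pow n r) (pow_ne_zero n hr)).deriv
  rw [show (fun x : ℝ => k / x ^ n) = ((fun _ => k) / fun x => x ^ n) from rfl, h]; ring

/-- the particular choice `f₁ = −1/r²`, `f₂ = c/r²`, `c₁ = −1/r⁴`,
`c₂ = −(4r⁴c₀² + 2r³c₀′ + c²)/(2r⁴(2r²c₀ − 1))` satisfies the three equations of the
vanishing-flag-curvature system for a spherically symmetric Landsberg surface. -/
theorem stmt_13 (a b : ℝ) (ha : 0 ≤ a) (c : ℝ)
    (c₀ : ℝ → ℝ) (hc₀ : ContDiffOn ℝ (⊤ : ℕ∞) c₀ (Set.Ioo a b))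
    (hnz : ∀ r ∈ Set.Ioo a b, 2 * r ^ 2 * c₀ r - 1 ≠ 0)
    (f₁ f₂ c₁ c₂ : ℝ → ℝ)
    (hf₁ : ∀ r ∈ Set.Ioo a b, f₁ r = -1 / r ^ 2)
    (hf₂ : ∀ r ∈ Set.Ioo a b, f₂ r = c / r ^ 2)
    (hc₁ : ∀ r ∈ Set.Ioo a b, c₁ r = -1 / r ^ 4)
    (hc₂ : ∀ r ∈ Set.Ioo a b, c₂ r = -(4 * r ^ 4 * (c₀ r) ^ 2 + 2 * r ^ 3 * deriv c₀ r + c ^ 2)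
      / (2 * r ^ 4 * (2 * r ^ 2 * c₀ r - 1))) :
    ∀ r ∈ Set.Ioo a b,
      (6 * r * c₁ r + r ^ 2 * deriv c₁ r + 2 * r ^ 3 * c₁ r * f₁ r
        + 2 * r * f₁ r * f₂ r - deriv f₂ r = 0) ∧
      (2 * c₀ r + 2 * r ^ 2 * c₀ r * f₁ r + 2 * r ^ 2 * c₂ r + 2 * r ^ 4 * f₁ r * c₂ r
        + r ^ 2 * (f₁ r) ^ 2 - f₁ r - r * deriv f₁ r = 0) ∧
      (4 * r ^ 2 * (c₀ r) ^ 2 + 2 * c₀ r + 2 * r * deriv c₀ r + 4 * r ^ 4 * c₀ r * c₂ r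
        + 2 * r ^ 2 * c₀ r * f₁ r - r ^ 6 * (c₁ r) ^ 2 - 2 * r ^ 2 * c₂ r - f₁ r
        + r ^ 2 * (f₂ r) ^ 2 = 0) := by
  intro r hr
  have hr0 : (0:ℝ) < r := lt_of_le_of_lt ha hr.1
  have hrne : r ≠ 0 := ne_of_gt hr0
  have hD := hnz r hr
  have hdc₁ : deriv c₁ r = 4 / r ^ 5 := by
    rw [deriv_of_eq_on isOpen_Ioo hr hc₁, show (fun x : ℝ => -1 / x ^ 4) = fun x : ℝ => (-1) / x ^ 4 from rfl,
      deriv_const_div_pow (-1) 4 hrne]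
    field_simp; ring
  have hdf₂ : deriv f₂ r = -2 * c / r ^ 3 := by
    rw [deriv_of_eq_on isOpen_Ioo hr hf₂, deriv_const_div_pow c 2 hrne]
    field_simp; ring
  have hdf₁ : deriv f₁ r = 2 / r ^ 3 := by
    rw [deriv_of_eq_on isOpen_Ioo hr hf₁, show (fun x : ℝ => -1 / x ^ 2) = fun x : ℝ => (-1) / x ^ 2 from rfl,
      deriv_const_div_pow (-1) 2 hrne]
    field_simp; ring
  rw [hf₁ r hr, hf₂ r hr, hc₁ r hr, hc₂ r hr, hdc₁, hdf₂, hdf₁]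
  have hD' : -1 + r ^ 2 * c₀ r * 2 ≠ 0 := by intro h; apply hD; linarith
  refine ⟨by field_simp; ring, by field_simp; ring, by field_simp; ring_nf; field_simp; ring⟩
end

section
/- Let I ⊆ (0,∞) be an open interval, let c be a real constant, and let c₀ be a smooth function on I with 2r²c₀(r) − 1 ≠ 0 for all r ∈ I. Define on D = {(r,s) : r ∈ I, |s| < r}: P(r,s) = −s/r² + (c/r²)√(r² − s²) and Q(r,s) = c₀(r) − [(4r⁴c₀(r)² + 2r³c₀′(r) + c²)/(2r⁴(2r²c₀(r) − 1))]·s² − (s/r⁴)√(r² − s²) (primes denote d/dr). Then on all of D: R₁ + (r² − s²)R₃ = 0, where R₁ = 2Q − (s/r)P_r − P_s + 2(r² − s²)P_sQ + P² + 2sPQ and R₃ = (2/r)Q_r − Q_ss − (s/r)Q_rs + 2(r² − s²)QQ_ss + 4Q² − (r² − s²)Q_s² − 2sQQ_s (subscripts denote partial derivatives). -/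
set_option maxHeartbeats 8000000 in
set_option maxRecDepth 8192 in
set_option pp.maxSteps 10000000 in


/-- the spray constructed in Section 3 has vanishing flag curvature:
`R₁ + (r² − s²)R₃ = 0` on `D`, for `P = −s/r² + (c/r²)√(r² − s²)` and
`Q = c₀ − [(4r⁴c₀² + 2r³c₀′ + c²)/(2r⁴(2r²c₀ − 1))]s² − (s/r⁴)√(r² − s²)`. -/
theorem stmt_14 (a b : ℝ) (ha : 0 ≤ a) (c : ℝ)
    (c₀ : ℝ → ℝ) (hc₀ : ContDiffOn ℝ (⊤ : ℕ∞) c₀ (Set.Ioo a b))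
    (hnz : ∀ r ∈ Set.Ioo a b, 2 * r ^ 2 * c₀ r - 1 ≠ 0)
    (P Q : ℝ → ℝ → ℝ)
    (hP : ∀ r s, P r s = -s / r ^ 2 + (c / r ^ 2) * Real.sqrt (r ^ 2 - s ^ 2))
    (hQ : ∀ r s, Q r s = c₀ r
      - ((4 * r ^ 4 * (c₀ r) ^ 2 + 2 * r ^ 3 * deriv c₀ r + c ^ 2)
          / (2 * r ^ 4 * (2 * r ^ 2 * c₀ r - 1))) * s ^ 2
      - (s / r ^ 4) * Real.sqrt (r ^ 2 - s ^ 2))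
    (R₁ R₃ : ℝ → ℝ → ℝ)
    (hR₁ : ∀ r s, R₁ r s = 2 * Q r s - (s / r) * deriv (fun t => P t s) r - deriv (P r) s
      + 2 * (r ^ 2 - s ^ 2) * deriv (P r) s * Q r s + (P r s) ^ 2 + 2 * s * P r s * Q r s)
    (hR₃ : ∀ r s, R₃ r s = (2 / r) * deriv (fun t => Q t s) r - deriv (deriv (Q r)) s
      - (s / r) * deriv (fun t => deriv (Q t) s) r
      + 2 * (r ^ 2 - s ^ 2) * Q r s * deriv (deriv (Q r)) s + 4 * (Q r s) ^ 2
      - (r ^ 2 - s ^ 2) * (deriv (Q r) s) ^ 2 - 2 * s * Q r s * deriv (Q r) s) :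
    ∀ r ∈ Set.Ioo a b, ∀ s : ℝ, |s| < r →
      R₁ r s + (r ^ 2 - s ^ 2) * R₃ r s = 0 := by
  intro r hr s hs
  obtain ⟨har, hrb⟩ := hr
  have hr0 : (0:ℝ) < r := lt_of_le_of_lt ha har
  have hrne : r ≠ 0 := ne_of_gt hr0
  have habs := abs_lt.mp hs
  have hq : 0 < r ^ 2 - s ^ 2 := by nlinarith [habs.1, habs.2]
  have hWpos : 0 < Real.sqrt (r ^ 2 - s ^ 2) := Real.sqrt_pos.mpr hq
  have hWne : Real.sqrt (r ^ 2 - s ^ 2) ≠ 0 := ne_of_gt hWpos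
  have hW2 : Real.sqrt (r ^ 2 - s ^ 2) ^ 2 = r ^ 2 - s ^ 2 := Real.sq_sqrt hq.le
  have hden : 2 * r ^ 2 * c₀ r - 1 ≠ 0 := hnz r ⟨har, hrb⟩
  -- derivative of √(t² - y²) in the second variable
  have hsq : ∀ t u : ℝ, |u| < t → HasDerivAt (fun y => Real.sqrt (t ^ 2 - y ^ 2))
      (-(2 * u) / (2 * Real.sqrt (t ^ 2 - u ^ 2))) u := by
    intro t u hu
    have h1 : HasDerivAt (fun y : ℝ => t ^ 2 - y ^ 2) (-(2 * u)) u := by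
      simpa using ((hasDerivAt_pow 2 u).const_sub (t ^ 2))
    have h2 : t ^ 2 - u ^ 2 ≠ 0 := by
      have h3 := abs_lt.mp hu; nlinarith [h3.1, h3.2]
    exact h1.sqrt h2
  -- derivative of √(y² - u²) in the first variable
  have hsqr : ∀ t u : ℝ, |u| < t → HasDerivAt (fun y => Real.sqrt (y ^ 2 - u ^ 2))
      (2 * t / (2 * Real.sqrt (t ^ 2 - u ^ 2))) t := by
    intro t u hu
    have h1 : HasDerivAt (fun y : ℝ => y ^ 2 - u ^ 2) (2 * t) t := by
      simpa using ((hasDerivAt_pow 2 t).sub_const (u ^ 2))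
    have h2 : t ^ 2 - u ^ 2 ≠ 0 := by
      have h3 := abs_lt.mp hu; nlinarith [h3.1, h3.2]
    exact h1.sqrt h2
  obtain ⟨Af, hAfdef⟩ : ∃ f : ℝ → ℝ, f = fun t =>
      (4 * t ^ 4 * (c₀ t) ^ 2 + 2 * t ^ 3 * deriv c₀ t + c ^ 2)
        / (2 * t ^ 4 * (2 * t ^ 2 * c₀ t - 1)) := ⟨_, rfl⟩
  have hQval : ∀ t u : ℝ, Q t u = c₀ t - Af t * u ^ 2 - u / t ^ 4 * Real.sqrt (t ^ 2 - u ^ 2) := by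
    intro t u
    rw [hQ, hAfdef]
  have hmem : Set.Ioo a b ∈ nhds r := isOpen_Ioo.mem_nhds ⟨har, hrb⟩
  have hc0d : DifferentiableAt ℝ c₀ r := (hc₀.contDiffAt hmem).differentiableAt (by simp)
  have hdc : ContDiffOn ℝ (⊤ : ℕ∞) (deriv c₀) (Set.Ioo a b) := hc₀.deriv_of_isOpen isOpen_Ioo (by simp)
  have hdc0 : DifferentiableAt ℝ (deriv c₀) r := (hdc.contDiffAt hmem).differentiableAt (by simp)
  have hAfd : DifferentiableAt ℝ Af r := by
    rw [hAfdef]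
    apply DifferentiableAt.div
    · exact ((((differentiableAt_const _).mul (differentiableAt_pow _)).mul (hc0d.pow 2)).add
        (((differentiableAt_const _).mul (differentiableAt_pow _)).mul hdc0)).add
        (differentiableAt_const _)
    · exact ((differentiableAt_const _).mul (differentiableAt_pow _)).mul
        ((((differentiableAt_const _).mul (differentiableAt_pow _)).mul hc0d).sub
          (differentiableAt_const _))
    · exact mul_ne_zero (by positivity) hden
  obtain ⟨dA, hdAdef⟩ : ∃ x : ℝ, x = deriv Af r := ⟨_, rfl⟩
  have hdA : HasDerivAt Af dA r := by rw [hdAdef]; exact hAfd.hasDerivAt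
  -- the s-derivative of Q t at any admissible point
  have hQderiv : ∀ t u : ℝ, |u| < t → deriv (Q t) u =
      -(Af t * (2 * u)) - (1 / t ^ 4 * Real.sqrt (t ^ 2 - u ^ 2)
        + u / t ^ 4 * (-(2 * u) / (2 * Real.sqrt (t ^ 2 - u ^ 2)))) := by
    intro t u hu
    have hQt : Q t = fun y => c₀ t - Af t * y ^ 2 - y / t ^ 4 * Real.sqrt (t ^ 2 - y ^ 2) :=
      funext fun y => hQval t y
    have p1 : HasDerivAt (fun y : ℝ => Af t * y ^ 2) (Af t * (2 * u)) u := by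
      simpa using (hasDerivAt_pow 2 u).const_mul (Af t)
    have p2 : HasDerivAt (fun y : ℝ => y / t ^ 4) (1 / t ^ 4) u := (hasDerivAt_id u).div_const _
    have p3 := p2.mul (hsq t u hu)
    rw [hQt]
    exact ((p1.const_sub (c₀ t)).sub p3).deriv
  -- first derivative of Q r at s
  have hQs_eq : deriv (Q r) s =
      -(Af r * (2 * s)) - (1 / r ^ 4 * Real.sqrt (r ^ 2 - s ^ 2)
        + s / r ^ 4 * (-(2 * s) / (2 * Real.sqrt (r ^ 2 - s ^ 2)))) := hQderiv r s hs
  -- second derivative of Q r at s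
  have hQss_eq : deriv (deriv (Q r)) s =
      -(Af r * 2) - (1 / r ^ 4 * (-(2 * s) / (2 * Real.sqrt (r ^ 2 - s ^ 2)))
        + (1 / r ^ 4 * (-(2 * s) / (2 * Real.sqrt (r ^ 2 - s ^ 2)))
          + s / r ^ 4 * ((-2 * (2 * Real.sqrt (r ^ 2 - s ^ 2))
              - -(2 * s) * (2 * (-(2 * s) / (2 * Real.sqrt (r ^ 2 - s ^ 2)))))
            / (2 * Real.sqrt (r ^ 2 - s ^ 2)) ^ 2))) := by
    have h1 : deriv (Q r) =ᶠ[nhds s] (fun u => -(Af r * (2 * u))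
        - (1 / r ^ 4 * Real.sqrt (r ^ 2 - u ^ 2)
          + u / r ^ 4 * (-(2 * u) / (2 * Real.sqrt (r ^ 2 - u ^ 2))))) := by
      filter_upwards [Ioo_mem_nhds habs.1 habs.2] with u hu
      exact hQderiv r u (abs_lt.mpr hu)
    rw [h1.deriv_eq]
    have g1 : HasDerivAt (fun u : ℝ => Af r * (2 * u)) (Af r * 2) s := by
      simpa using ((hasDerivAt_id s).const_mul (2:ℝ)).const_mul (Af r)
    have g2 : HasDerivAt (fun u : ℝ => 1 / r ^ 4 * Real.sqrt (r ^ 2 - u ^ 2))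
        (1 / r ^ 4 * (-(2 * s) / (2 * Real.sqrt (r ^ 2 - s ^ 2)))) s :=
      (hsq r s hs).const_mul _
    have q1 : HasDerivAt (fun u : ℝ => u / r ^ 4) (1 / r ^ 4) s := (hasDerivAt_id s).div_const _
    have q2num : HasDerivAt (fun u : ℝ => -(2 * u)) (-2 : ℝ) s := by
      simpa using ((hasDerivAt_id s).const_mul (2:ℝ)).fun_neg
    have q2den : HasDerivAt (fun u : ℝ => 2 * Real.sqrt (r ^ 2 - u ^ 2))
        (2 * (-(2 * s) / (2 * Real.sqrt (r ^ 2 - s ^ 2)))) s := (hsq r s hs).const_mul 2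
    have q2 := q2num.div q2den (by positivity)
    have g3 := q1.mul q2
    exact ((g1.neg).sub (g2.add g3)).deriv
  -- r-derivative of t ↦ Q t s
  have a4 : HasDerivAt (fun t : ℝ => t ^ 4) (4 * r ^ 3) r := by
    simpa using hasDerivAt_pow 4 r
  have m2s : HasDerivAt (fun t : ℝ => Real.sqrt (t ^ 2 - s ^ 2))
      (2 * r / (2 * Real.sqrt (r ^ 2 - s ^ 2))) r := hsqr r s hs
  have m3p := (hasDerivAt_const r s).div a4 (pow_ne_zero 4 hrne)
  have hQr_eq : deriv (fun t => Q t s) r = deriv c₀ r - dA * s ^ 2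
      - ((0 * r ^ 4 - s * (4 * r ^ 3)) / (r ^ 4) ^ 2 * Real.sqrt (r ^ 2 - s ^ 2)
        + s / r ^ 4 * (2 * r / (2 * Real.sqrt (r ^ 2 - s ^ 2)))) := by
    rw [show (fun t => Q t s) = fun t => c₀ t - Af t * s ^ 2
        - s / t ^ 4 * Real.sqrt (t ^ 2 - s ^ 2) from funext fun t => hQval t s]
    exact ((hc0d.hasDerivAt.sub (hdA.mul_const _)).sub (m3p.mul m2s)).deriv
  -- mixed derivative
  have hQrs_eq : deriv (fun t => deriv (Q t) s) r =
      -(dA * (2 * s)) - (((0 * r ^ 4 - 1 * (4 * r ^ 3)) / (r ^ 4) ^ 2 * Real.sqrt (r ^ 2 - s ^ 2)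
          + 1 / r ^ 4 * (2 * r / (2 * Real.sqrt (r ^ 2 - s ^ 2))))
        + ((0 * r ^ 4 - s * (4 * r ^ 3)) / (r ^ 4) ^ 2
              * (-(2 * s) / (2 * Real.sqrt (r ^ 2 - s ^ 2)))
          + s / r ^ 4 * ((0 * (2 * Real.sqrt (r ^ 2 - s ^ 2))
              - -(2 * s) * (2 * (2 * r / (2 * Real.sqrt (r ^ 2 - s ^ 2)))))
            / (2 * Real.sqrt (r ^ 2 - s ^ 2)) ^ 2))) := by
    have h1 : (fun t => deriv (Q t) s) =ᶠ[nhds r] (fun t => -(Af t * (2 * s))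
        - (1 / t ^ 4 * Real.sqrt (t ^ 2 - s ^ 2)
          + s / t ^ 4 * (-(2 * s) / (2 * Real.sqrt (t ^ 2 - s ^ 2))))) := by
      filter_upwards [Ioo_mem_nhds hs hrb] with t ht
      exact hQderiv t s ht.1
    rw [h1.deriv_eq]
    have m1 : HasDerivAt (fun t : ℝ => Af t * (2 * s)) (dA * (2 * s)) r := hdA.mul_const _
    have m2p := (hasDerivAt_const r (1:ℝ)).div a4 (pow_ne_zero 4 hrne)
    have m2 := m2p.mul m2s
    have m3q := (hasDerivAt_const r (-(2 * s))).div (m2s.const_mul 2)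
      (by positivity)
    have m3 := m3p.mul m3q
    exact ((m1.neg).sub (m2.add m3)).deriv
  -- s-derivative of P r
  have hPs_eq : deriv (P r) s = -1 / r ^ 2
      + c / r ^ 2 * (-(2 * s) / (2 * Real.sqrt (r ^ 2 - s ^ 2))) := by
    rw [show P r = fun u => -u / r ^ 2 + c / r ^ 2 * Real.sqrt (r ^ 2 - u ^ 2) from
      funext fun u => hP r u]
    have ps1 : HasDerivAt (fun u : ℝ => -u / r ^ 2) (-1 / r ^ 2) s :=
      (hasDerivAt_id s).neg.div_const _
    exact (ps1.add ((hsq r s hs).const_mul _)).deriv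
  -- r-derivative of t ↦ P t s
  have a2 : HasDerivAt (fun t : ℝ => t ^ 2) (2 * r) r := by
    simpa using hasDerivAt_pow 2 r
  have hPr_eq : deriv (fun t => P t s) r =
      (0 * r ^ 2 - -s * (2 * r)) / (r ^ 2) ^ 2
      + ((0 * r ^ 2 - c * (2 * r)) / (r ^ 2) ^ 2 * Real.sqrt (r ^ 2 - s ^ 2)
        + c / r ^ 2 * (2 * r / (2 * Real.sqrt (r ^ 2 - s ^ 2)))) := by
    rw [show (fun t => P t s) = fun t => -s / t ^ 2 + c / t ^ 2 * Real.sqrt (t ^ 2 - s ^ 2) from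
      funext fun t => hP t s]
    have pr1 := (hasDerivAt_const r (-s)).div a2 (pow_ne_zero 2 hrne)
    have pr2p := (hasDerivAt_const r c).div a2 (pow_ne_zero 2 hrne)
    exact (pr1.add (pr2p.mul (hsqr r s hs))).deriv
  have hPs2 : deriv (P r) s = -(1 / r ^ 2) - c * s / (r ^ 2 * Real.sqrt (r ^ 2 - s ^ 2)) := by
    rw [hPs_eq]; field_simp; ring
  have hPr2 : deriv (fun t => P t s) r = 2 * s / r ^ 3 - 2 * c * Real.sqrt (r ^ 2 - s ^ 2) / r ^ 3
      + c / (r * Real.sqrt (r ^ 2 - s ^ 2)) := by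
    rw [hPr_eq]; field_simp; ring
  have hQs2 : deriv (Q r) s = -(2 * Af r * s) - Real.sqrt (r ^ 2 - s ^ 2) / r ^ 4
      + s ^ 2 / (r ^ 4 * Real.sqrt (r ^ 2 - s ^ 2)) := by
    rw [hQs_eq]; field_simp; ring
  have hQss2 : deriv (deriv (Q r)) s = -(2 * Af r)
      + 3 * s / (r ^ 4 * Real.sqrt (r ^ 2 - s ^ 2))
      + s ^ 3 / (r ^ 4 * Real.sqrt (r ^ 2 - s ^ 2) ^ 3) := by
    rw [hQss_eq]; field_simp; ring
  have hQr2 : deriv (fun t => Q t s) r = deriv c₀ r - dA * s ^ 2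
      + 4 * s * Real.sqrt (r ^ 2 - s ^ 2) / r ^ 5 - s / (r ^ 3 * Real.sqrt (r ^ 2 - s ^ 2)) := by
    rw [hQr_eq]; field_simp; ring
  have hQrs2 : deriv (fun t => deriv (Q t) s) r = -(2 * dA * s)
      + 4 * Real.sqrt (r ^ 2 - s ^ 2) / r ^ 5 - 1 / (r ^ 3 * Real.sqrt (r ^ 2 - s ^ 2))
      - 4 * s ^ 2 / (r ^ 5 * Real.sqrt (r ^ 2 - s ^ 2))
      - s ^ 2 / (r ^ 3 * Real.sqrt (r ^ 2 - s ^ 2) ^ 3) := by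
    rw [hQrs_eq]; field_simp; ring
  rw [hR₁, hR₃, hPs2, hPr2, hQr2, hQs2, hQss2, hQrs2, hQval r s, hP r s]
  have hD2 : (2 * r ^ 4 * (2 * r ^ 2 * c₀ r - 1)) ≠ 0 := mul_ne_zero (by positivity) hden
  have hArel : Af r * (2 * r ^ 4 * (2 * r ^ 2 * c₀ r - 1))
      = 4 * r ^ 4 * c₀ r ^ 2 + 2 * r ^ 3 * deriv c₀ r + c ^ 2 := by
    rw [hAfdef]
    exact div_mul_cancel₀ _ hD2
  apply mul_left_cancel₀ (pow_ne_zero 2 hD2)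
  rw [mul_zero]
  field_simp
  generalize hWg : Real.sqrt (r ^ 2 - s ^ 2) = W at hW2 ⊢
  generalize hc0g : c₀ r = c0 at hArel ⊢
  generalize hd1g : deriv c₀ r = d1 at hArel ⊢
  generalize hgg : Af r = g at hArel ⊢
  linear_combination (((-12) * s ^ 4 * W ^ 3 + (-12) * s ^ 6 * W + (16) * r ^ 2 * s ^ 2 * W ^ 3 + (-8) * r ^ 2 * s ^ 2 * c * W ^ 3 + (-16) * r ^ 2 * s ^ 3 * W ^ 2 + (12) * r ^ 2 * s ^ 4 * W + (48) * r ^ 2 * s ^ 4 * c0 * W ^ 3 + (48) * r ^ 2 * s ^ 6 * c0 * W + (-4) * r ^ 4 * W ^ 3 + (4) * r ^ 4 * c ^ 2 * W ^ 3 + (16) * r ^ 4 * s * W ^ 2 + (-64) * r ^ 4 * s ^ 2 * c0 * W ^ 3 + (32) * r ^ 4 * s ^ 2 * c * c0 * W ^ 3 + (-4) * r ^ 4 * s ^ 2 * c ^ 2 * W + (88) * r ^ 4 * s ^ 3 * c0 * W ^ 2 + (-48) * r ^ 4 * s ^ 4 * c0 * W + (-48) * r ^ 4 * s ^ 4 *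 c0 ^ 2 * W ^ 3 + (-8) * r ^ 4 * s ^ 5 * g * W ^ 2 + (8) * r ^ 4 * s ^ 5 * c0 + (-48) * r ^ 4 * s ^ 6 * c0 ^ 2 * W + (-8) * r ^ 4 * s ^ 7 * g + (16) * r ^ 6 * c0 * W ^ 3 + (4) * r ^ 6 * c ^ 2 * W + (-16) * r ^ 6 * c ^ 2 * c0 * W ^ 3 + (-88) * r ^ 6 * s * c0 * W ^ 2 + (8) * r ^ 6 * s * c * c0 * W ^ 2 + (64) * r ^ 6 * s ^ 2 * c0 ^ 2 * W ^ 3 + (-32) * r ^ 6 * s ^ 2 * c * c0 ^ 2 * W ^ 3 + (16) * r ^ 6 * s ^ 2 * c ^ 2 * c0 * W + (8) * r ^ 6 * s ^ 3 * g * W ^ 2 + (-8) * r ^ 6 * s ^ 3 * c0 + (-160) * r ^ 6 * s ^ 3 * c0 ^ 2 * W ^ 2 + (-8) * r ^ 6 * s ^ 3 * c * g * W ^ 2 + (48) * r ^ 6 * s ^ 4 * c0 ^ 2 * W + (8) * r ^ 6 * s ^ 5 * g + (32) * r ^ 6 * s ^ 5 * c0 * g * W ^ 2 + (-32) * r ^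 6 * s ^ 5 * c0 ^ 2 + (32) * r ^ 6 * s ^ 7 * c0 * g + (-8) * r ^ 7 * s ^ 2 * d1 * W + (-16) * r ^ 8 * c0 ^ 2 * W ^ 3 + (-16) * r ^ 8 * c ^ 2 * c0 * W + (16) * r ^ 8 * c ^ 2 * c0 ^ 2 * W ^ 3 + (160) * r ^ 8 * s * c0 ^ 2 * W ^ 2 + (-32) * r ^ 8 * s * c * c0 ^ 2 * W ^ 2 + (-8) * r ^ 8 * s ^ 2 * g * W + (-16) * r ^ 8 * s ^ 2 * c0 ^ 2 * W + (-16) * r ^ 8 * s ^ 2 * c ^ 2 * c0 ^ 2 * W + (-32) * r ^ 8 * s ^ 3 * c0 * g * W ^ 2 + (32) * r ^ 8 * s ^ 3 * c0 ^ 2 + (96) * r ^ 8 * s ^ 3 * c0 ^ 3 * W ^ 2 + (32) * r ^ 8 * s ^ 3 * c * c0 * g * W ^ 2 + (-32) * r ^ 8 * s ^ 5 * c0 * g + (-32) * r ^ 8 * s ^ 5 * c0 ^ 2 * g * W ^ 2 + (32) * r ^ 8 * s ^ 5 * c0 ^ 3 + (-32) * r ^ 8 * s ^ 7 * c0 ^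 2 * g + (8) * r ^ 9 * d1 * W + (32) * r ^ 9 * s ^ 2 * c0 * d1 * W + (8) * r ^ 10 * g * W + (16) * r ^ 10 * c0 ^ 2 * W + (16) * r ^ 10 * c ^ 2 * c0 ^ 2 * W + (-96) * r ^ 10 * s * c0 ^ 3 * W ^ 2 + (32) * r ^ 10 * s * c * c0 ^ 3 * W ^ 2 + (48) * r ^ 10 * s ^ 2 * c0 * g * W + (64) * r ^ 10 * s ^ 2 * c0 ^ 3 * W + (32) * r ^ 10 * s ^ 3 * c0 ^ 2 * g * W ^ 2 + (-32) * r ^ 10 * s ^ 3 * c0 ^ 3 + (-32) * r ^ 10 * s ^ 3 * c * c0 ^ 2 * g * W ^ 2 + (32) * r ^ 10 * s ^ 5 * c0 ^ 2 * g + (-32) * r ^ 11 * c0 * d1 * W + (-32) * r ^ 11 * s ^ 2 * c0 ^ 2 * d1 * W + (-48) * r ^ 12 * c0 * g * W + (-64) * r ^ 12 * c0 ^ 3 * W + (-96) * r ^ 12 * s ^ 2 * c0 ^ 2 * g * W + (-64) * r ^ 12 * s ^ 2 * c0 ^ 4 * W + (32) * r ^ 13 * c0 ^ 2 * d1 * W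 + (96) * r ^ 14 * c0 ^ 2 * g * W + (64) * r ^ 14 * c0 ^ 4 * W + (64) * r ^ 14 * s ^ 2 * c0 ^ 3 * g * W + (-64) * r ^ 16 * c0 ^ 3 * g * W)) * hW2 + (((-4) * r ^ 4 * s ^ 4 * W + (8) * r ^ 6 * s ^ 2 * W + (16) * r ^ 6 * s ^ 4 * c0 * W + (-4) * r ^ 8 * W + (-32) * r ^ 8 * s ^ 2 * c0 * W + (-16) * r ^ 8 * s ^ 4 * c0 ^ 2 * W + (16) * r ^ 10 * c0 * W + (32) * r ^ 10 * s ^ 2 * c0 ^ 2 * W + (-16) * r ^ 12 * c0 ^ 2 * W)) * hArel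
end

section
/- Let I ⊆ (0,∞) be an open interval, let c be a real constant with c ≠ 1/3, and let c₀ be a smooth function on I with 2r²c₀(r) − 1 ≠ 0 for all r ∈ I. Define on D = {(r,s) : r ∈ I, |s| < r}: P(r,s) = −s/r² + (c/r²)√(r² − s²) and Q(r,s) = c₀(r) − [(4r⁴c₀(r)² + 2r³c₀′(r) + c²)/(2r⁴(2r²c₀(r) − 1))]·s² − (s/r⁴)√(r² − s²). Then for all (r,s) ∈ D: 3(P − sP_s) + (r² − s²)(Q_s − sQ_ss) = (3c − 1)/√(r² − s²), and in particular 3(P − sP_s) + (r² − s²)(Q_s − sQ_ss) ≠ 0 (subscript s denotes partial derivative in s). -/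
lemma sqrtD (r t : ℝ) (h : t ^ 2 < r ^ 2) :
    HasDerivAt (fun u : ℝ => Real.sqrt (r ^ 2 - u ^ 2))
      (-t / Real.sqrt (r ^ 2 - t ^ 2)) t := by
  have h0 : (0:ℝ) < r ^ 2 - t ^ 2 := sub_pos.2 h
  have hsp : 0 < Real.sqrt (r ^ 2 - t ^ 2) := Real.sqrt_pos.2 h0
  have h1 : HasDerivAt (fun u : ℝ => r ^ 2 - u ^ 2) (-(2 * t)) t := by
    simpa [Pi.sub_def] using (hasDerivAt_const t (r ^ 2)).sub (hasDerivAt_pow 2 t)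
  have : HasDerivAt (fun u : ℝ => Real.sqrt (r ^ 2 - u ^ 2)) _ t :=
    (Real.hasDerivAt_sqrt h0.ne').comp t h1
  convert this using 1
  field_simp

set_option maxHeartbeats 1000000 in
/-- the spray of the metric of Theorem 3.3 satisfies
`3(P − sP_s) + (r² − s²)(Q_s − sQ_ss) = (3c − 1)/√(r² − s²) ≠ 0` when `c ≠ 1/3`,
so the metric is not weakly Berwaldian, hence not Berwaldian. -/
theorem stmt_15 (a b : ℝ) (ha : 0 ≤ a) (c : ℝ) (hc : c ≠ 1 / 3)
    (c₀ : ℝ → ℝ) (hc₀ : ContDiffOn ℝ (⊤ : ℕ∞) c₀ (Set.Ioo a b))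
    (hnz : ∀ r ∈ Set.Ioo a b, 2 * r ^ 2 * c₀ r - 1 ≠ 0)
    (P Q : ℝ → ℝ → ℝ)
    (hP : ∀ r s, P r s = -s / r ^ 2 + (c / r ^ 2) * Real.sqrt (r ^ 2 - s ^ 2))
    (hQ : ∀ r s, Q r s = c₀ r
      - ((4 * r ^ 4 * (c₀ r) ^ 2 + 2 * r ^ 3 * deriv c₀ r + c ^ 2)
          / (2 * r ^ 4 * (2 * r ^ 2 * c₀ r - 1))) * s ^ 2
      - (s / r ^ 4) * Real.sqrt (r ^ 2 - s ^ 2)) :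
    ∀ r ∈ Set.Ioo a b, ∀ s : ℝ, |s| < r →
      (3 * (P r s - s * deriv (P r) s)
          + (r ^ 2 - s ^ 2) * (deriv (Q r) s - s * deriv (deriv (Q r)) s)
        = (3 * c - 1) / Real.sqrt (r ^ 2 - s ^ 2)) ∧
      3 * (P r s - s * deriv (P r) s)
          + (r ^ 2 - s ^ 2) * (deriv (Q r) s - s * deriv (deriv (Q r)) s) ≠ 0 := by
  intro r hr s hs
  have hrpos : 0 < r := lt_of_le_of_lt ha hr.1
  have hr0 : r ≠ 0 := hrpos.ne'
  have habs := abs_lt.mp hs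
  have h2 : s ^ 2 < r ^ 2 := by nlinarith [habs.1, habs.2]
  have h0 : (0:ℝ) < r ^ 2 - s ^ 2 := sub_pos.2 h2
  have hsp : 0 < Real.sqrt (r ^ 2 - s ^ 2) := Real.sqrt_pos.2 h0
  have hss : Real.sqrt (r ^ 2 - s ^ 2) ^ 2 = r ^ 2 - s ^ 2 := Real.sq_sqrt h0.le
  set K : ℝ := (4 * r ^ 4 * (c₀ r) ^ 2 + 2 * r ^ 3 * deriv c₀ r + c ^ 2)
      / (2 * r ^ 4 * (2 * r ^ 2 * c₀ r - 1)) with hK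
  -- derivative of P r
  have hPf : P r = fun t => -t / r ^ 2 + (c / r ^ 2) * Real.sqrt (r ^ 2 - t ^ 2) :=
    funext (hP r)
  have hPd : HasDerivAt (P r)
      (-1 / r ^ 2 + (c / r ^ 2) * (-s / Real.sqrt (r ^ 2 - s ^ 2))) s := by
    rw [hPf]
    exact (((hasDerivAt_id s).neg.div_const (r ^ 2)).add
      ((sqrtD r s h2).const_mul (c / r ^ 2)))
  -- first derivative of Q r on the open set
  have hQf : Q r = fun t => c₀ r - K * t ^ 2
      - (t / r ^ 4) * Real.sqrt (r ^ 2 - t ^ 2) := funext (hQ r)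
  set Q2 : ℝ → ℝ := fun t => -(2 * K * t)
      - (r ^ 2 - 2 * t ^ 2) / (r ^ 4 * Real.sqrt (r ^ 2 - t ^ 2)) with hQ2
  have hQd : ∀ t : ℝ, t ^ 2 < r ^ 2 → HasDerivAt (Q r) (Q2 t) t := by
    intro t ht
    have h0' : (0:ℝ) < r ^ 2 - t ^ 2 := sub_pos.2 ht
    have hsp' : 0 < Real.sqrt (r ^ 2 - t ^ 2) := Real.sqrt_pos.2 h0'
    rw [hQf]
    have d1 : HasDerivAt (fun u : ℝ => c₀ r - K * u ^ 2) (-(K * (2 * t))) t := by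
      simpa [Pi.sub_def] using (hasDerivAt_const t (c₀ r)).sub ((hasDerivAt_pow 2 t).const_mul K)
    have d2 : HasDerivAt (fun u : ℝ => (u / r ^ 4) * Real.sqrt (r ^ 2 - u ^ 2))
        ((1 / r ^ 4) * Real.sqrt (r ^ 2 - t ^ 2)
          + (t / r ^ 4) * (-t / Real.sqrt (r ^ 2 - t ^ 2))) t := by
      have := ((hasDerivAt_id t).div_const (r ^ 4)).mul (sqrtD r t ht)
      simpa [Pi.mul_def] using this
    have : HasDerivAt (fun u : ℝ => c₀ r - K * u ^ 2 - (u / r ^ 4) * Real.sqrt (r ^ 2 - u ^ 2)) _ t :=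
      d1.sub d2
    convert this using 1
    show -(2 * K * t) - (r ^ 2 - 2 * t ^ 2) / (r ^ 4 * Real.sqrt (r ^ 2 - t ^ 2)) = _
    set w : ℝ := Real.sqrt (r ^ 2 - t ^ 2) with hwdef
    have hw : w ^ 2 = r ^ 2 - t ^ 2 := Real.sq_sqrt h0'.le
    have hwne : w ≠ 0 := hsp'.ne'
    have hr4 : r ^ 4 = (w ^ 2 + t ^ 2) ^ 2 := by nlinarith [hw]
    have hr2 : r ^ 2 = w ^ 2 + t ^ 2 := by linarith [hw]
    rw [hr4, hr2]
    have hwt : w ^ 2 + t ^ 2 ≠ 0 := by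
      have : 0 < w ^ 2 + t ^ 2 := by positivity
      exact this.ne'
    field_simp
    ring
  have hev : deriv (Q r) =ᶠ[nhds s] Q2 := by
    have hU : IsOpen {t : ℝ | t ^ 2 < r ^ 2} :=
      isOpen_lt (continuous_pow 2) continuous_const
    filter_upwards [hU.mem_nhds h2] with t ht using (hQd t ht).deriv
  have hderiv1 : deriv (Q r) s = Q2 s := (hQd s h2).deriv
  -- second derivative
  have dnum : HasDerivAt (fun t : ℝ => r ^ 2 - 2 * t ^ 2) (-(2 * (2 * s))) s := by
    simpa [Pi.sub_def] using (hasDerivAt_const s (r ^ 2)).sub ((hasDerivAt_pow 2 s).const_mul 2)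
  have dden : HasDerivAt (fun t : ℝ => r ^ 4 * Real.sqrt (r ^ 2 - t ^ 2))
      (r ^ 4 * (-s / Real.sqrt (r ^ 2 - s ^ 2))) s := (sqrtD r s h2).const_mul (r ^ 4)
  have hden0 : r ^ 4 * Real.sqrt (r ^ 2 - s ^ 2) ≠ 0 := by positivity
  have dQ2 : HasDerivAt Q2
      ((-(2 * K)) -
        ((-(2 * (2 * s))) * (r ^ 4 * Real.sqrt (r ^ 2 - s ^ 2))
          - (r ^ 2 - 2 * s ^ 2) * (r ^ 4 * (-s / Real.sqrt (r ^ 2 - s ^ 2))))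
          / (r ^ 4 * Real.sqrt (r ^ 2 - s ^ 2)) ^ 2) s := by
    have d3 : HasDerivAt (fun t : ℝ => -(2 * K * t)) (-(2 * K)) s := by
      simpa [Pi.neg_def] using ((hasDerivAt_id s).const_mul (2 * K)).neg
    exact d3.sub (dnum.div dden hden0)
  have hderiv2 : deriv (deriv (Q r)) s = deriv Q2 s := hev.deriv_eq
  have key : 3 * (P r s - s * deriv (P r) s)
      + (r ^ 2 - s ^ 2) * (deriv (Q r) s - s * deriv (deriv (Q r)) s)
      = (3 * c - 1) / Real.sqrt (r ^ 2 - s ^ 2) := by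
    rw [hP r s, hPd.deriv, hderiv1, hderiv2, dQ2.deriv]
    show 3 * ((-s / r ^ 2 + (c / r ^ 2) * Real.sqrt (r ^ 2 - s ^ 2))
        - s * (-1 / r ^ 2 + (c / r ^ 2) * (-s / Real.sqrt (r ^ 2 - s ^ 2))))
      + (r ^ 2 - s ^ 2) * ((-(2 * K * s)
          - (r ^ 2 - 2 * s ^ 2) / (r ^ 4 * Real.sqrt (r ^ 2 - s ^ 2)))
        - s * ((-(2 * K)) -
        ((-(2 * (2 * s))) * (r ^ 4 * Real.sqrt (r ^ 2 - s ^ 2))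
          - (r ^ 2 - 2 * s ^ 2) * (r ^ 4 * (-s / Real.sqrt (r ^ 2 - s ^ 2))))
          / (r ^ 4 * Real.sqrt (r ^ 2 - s ^ 2)) ^ 2))
      = (3 * c - 1) / Real.sqrt (r ^ 2 - s ^ 2)
    set w : ℝ := Real.sqrt (r ^ 2 - s ^ 2) with hwdef
    have hw : w ^ 2 = r ^ 2 - s ^ 2 := hss
    have hwne : w ≠ 0 := hsp.ne'
    have hr4 : r ^ 4 = (w ^ 2 + s ^ 2) ^ 2 := by nlinarith [hw]
    have hr2 : r ^ 2 = w ^ 2 + s ^ 2 := by linarith [hw]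
    rw [hr4, hr2]
    have hwt : w ^ 2 + s ^ 2 ≠ 0 := by
      have : 0 < w ^ 2 + s ^ 2 := by positivity
      exact this.ne'
    field_simp
    ring
  refine ⟨key, ?_⟩
  rw [key]
  have h31 : 3 * c - 1 ≠ 0 := by
    intro h; apply hc; linarith
  exact div_ne_zero h31 hsp.ne'
end
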